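/- arXiv:1207.3462 — 6 statements merged into one kernel-verified Lean document; each statement's English description precedes it below -/
import Mathlib

section
/- In any finite semiorder of length H, for indices 1 ≤ i < j ≤ H+1 with j − i ≥ 2, every element on the i-th level is larger than every element on the j-th level. -/
namespace Paper

/-- Two elements are incomparable. -/
def Incomp {α : Type*} [PartialOrder α] (a b : α) : Prop := ¬ a ≤ b ∧ ¬ b ≤ a

/-- A semiorder: no induced `2+2` and no induced `3+1`. -/
def IsSemiorder (α : Type*) [PartialOrder α] : Prop :=
  (¬ ∃ x y z w : α, y < x ∧ w < z ∧ Incomp x z ∧ Incomp x w ∧ Incomp y z ∧ Incomp y w) ∧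
  (¬ ∃ x y z w : α, z < y ∧ y < x ∧ Incomp x w ∧ Incomp y w ∧ Incomp z w)

/-- There is a chain of `k` elements. -/
def HasChain (α : Type*) [Preorder α] (k : ℕ) : Prop := ∃ c : Fin k → α, StrictMono c

/-- The length of a longest chain (number of edges) is exactly `H`. -/
def HasLength (α : Type*) [Preorder α] (H : ℕ) : Prop :=
  HasChain α (H + 1) ∧ ¬ HasChain α (H + 2)

/-- There is a chain of `k` elements all strictly above `a`. -/
def HasChainAbove {α : Type*} [Preorder α] (a : α) (k : ℕ) : Prop :=
  ∃ c : Fin k → α, StrictMono c ∧ ∀ j, a < c j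

/-- `a` is on the `i`-th level (`i ≥ 1`). -/
def OnLevel {α : Type*} [Preorder α] (a : α) (i : ℕ) : Prop :=
  1 ≤ i ∧ HasChainAbove a (i - 1) ∧ ¬ HasChainAbove a i

/-- Number of isomorphism classes of partial orders on `Fin n` satisfying `pred`. -/
noncomputable def countPosets (n : ℕ) (pred : PartialOrder (Fin n) → Prop) : ℕ :=
  Nat.card (Quot (fun (P Q : {P : PartialOrder (Fin n) // pred P}) =>
    ∃ e : Fin n ≃ Fin n, ∀ a b : Fin n,
      (@LE.le _ P.1.toPreorder.toLE a b ↔ @LE.le _ Q.1.toPreorder.toLE (e a) (e b))))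

/-- Semiorder of length exactly `H`. -/
def SemiLen (n H : ℕ) (P : PartialOrder (Fin n)) : Prop :=
  @IsSemiorder (Fin n) P ∧ @HasLength (Fin n) P.toPreorder H

/-- Semiorder of length at most `h`. -/
def SemiLenLe (n h : ℕ) (P : PartialOrder (Fin n)) : Prop :=
  @IsSemiorder (Fin n) P ∧ ¬ @HasChain (Fin n) P.toPreorder (h + 2)

/-- `f_H^n`. -/
noncomputable def fEx (H n : ℕ) : ℕ := countPosets n (SemiLen n H)

/-- `f_{≤h}^n`. -/
noncomputable def fLe (h n : ℕ) : ℕ := countPosets n (SemiLenLe n h)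

/-- Ordered (plane) trees. -/
inductive PTree where
  | node : List PTree → PTree

def PTree.size : PTree → ℕ
  | .node cs => 1 + (cs.attach.map fun c => PTree.size c.1).sum
decreasing_by have := List.sizeOf_lt_of_mem c.2; simp only [PTree.node.sizeOf_spec] at *; omega

def PTree.height : PTree → ℕ
  | .node cs => (cs.attach.map fun c => PTree.height c.1 + 1).foldr max 0
decreasing_by have := List.sizeOf_lt_of_mem c.2; simp only [PTree.node.sizeOf_spec] at *; omega

def PTree.countDepth : PTree → ℕ → ℕ
  | .node _, 0 => 1
  | .node cs, d + 1 => (cs.attach.map fun c => PTree.countDepth c.1 d).sum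
termination_by t _ => sizeOf t
decreasing_by have := List.sizeOf_lt_of_mem c.2; simp only [PTree.node.sizeOf_spec] at *; omega

/-- Value of a path after the steps in `l` (`true` = up-step, `false` = down-step). -/
def pathVal (l : List Bool) : ℤ := (l.map fun b => if b then (1 : ℤ) else -1).sum

/-- `l` is a Dyck path. -/
def IsDyckPath (l : List Bool) : Prop :=
  pathVal l = 0 ∧ ∀ p, p <+: l → 0 ≤ pathVal p

/-- The height of the path `l` is exactly `H`. -/
def DyckHeightIs (l : List Bool) (H : ℕ) : Prop :=
  (∃ p, p <+: l ∧ pathVal p = H) ∧ ∀ p, p <+: l → pathVal p ≤ (H : ℤ)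

/-- Number of peaks of a path. -/
def peaks (l : List Bool) : ℕ :=
  ((List.range l.length).filter fun i => l.getD i false && !(l.getD (i + 1) true)).length


theorem statement1 {α : Type*} [Fintype α] [PartialOrder α] (H : ℕ)
    (hsemi : IsSemiorder α) (hlen : HasLength α H) (i j : ℕ)
    (hi1 : 1 ≤ i) (hij : i < j) (hj : j ≤ H + 1) (hgap : 2 ≤ j - i)
    (a b : α) (ha : OnLevel a i) (hb : OnLevel b j) : b < a := by
  obtain ⟨m, rfl⟩ : ∃ m, j = m + 3 := ⟨j - 3, by omega⟩
  obtain ⟨c, hc, hbc⟩ : HasChainAbove b (m + 2) := hb.2.1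
  -- c : Fin (m + 2) → α is a chain above b
  have trunc : ∀ k, i ≤ k → ∀ d : Fin k → α, StrictMono d → (∀ t, a < d t) → False := by
    intro k hk d hd had
    exact ha.2.2 ⟨fun t => d (Fin.castLE hk t),
      fun s t h => hd h, fun t => had _⟩
  have h01 : (0 : Fin (m + 2)) < 1 := by rw [Fin.lt_def, Fin.val_zero, Fin.val_one]; omega
  have hac0 : ¬ a < c 0 := fun h =>
    trunc (m + 2) (by omega) c hc (fun t => lt_of_lt_of_le h (hc.monotone (Fin.zero_le t)))
  have hac1 : ¬ a < c 1 := by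
    intro h
    refine trunc (m + 1) (by omega) (fun t => c t.succ)
      (fun s t h' => hc (Fin.succ_lt_succ_iff.mpr h')) (fun t => lt_of_lt_of_le h ?_)
    refine hc.monotone ?_
    rw [Fin.le_def]
    simp [Fin.val_one]
  by_cases h0 : c 0 ≤ a
  · exact lt_of_lt_of_le (hbc 0) h0
  by_cases h1 : c 1 ≤ a
  · exact lt_of_lt_of_le (hbc 1) h1
  by_cases hba : b ≤ a
  · rcases hba.lt_or_eq with h | h
    · exact h
    · exact absurd (h ▸ hbc 0) hac0
  have hab : ¬ a ≤ b := fun h => hac0 (h.trans_lt (hbc 0))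
  have hac0' : ¬ a ≤ c 0 := fun h =>
    h.lt_or_eq.elim hac0 (fun he => hac1 (he ▸ hc h01))
  have hac1' : ¬ a ≤ c 1 := fun h =>
    h.lt_or_eq.elim hac1 (fun he => h1 he.ge)
  exact absurd ⟨c 1, c 0, b, a, hbc 0, hc h01, ⟨h1, hac1'⟩, ⟨h0, hac0'⟩, ⟨hba, hab⟩⟩ hsemi.2

end Paper
end

section
/- Let t(n,h,k) be the number of (n+1)-node ordered (plane) trees of height h+1 with exactly k nodes at depth h+1. Then for h ≥ 1, t(n,h,k) = Σ_{m=1}^{n-k} C(m+k−1, m−1) · t(n−k, h−1, m). -/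
namespace Paper

/-- `t(n,h,k)`: the number of `(n+1)`-node ordered trees of height `h+1` with
exactly `k` nodes at depth `h+1`. -/
noncomputable def t (n h k : ℕ) : ℕ :=
  Nat.card {tr : PTree // tr.size = n + 1 ∧ tr.height = h + 1 ∧ tr.countDepth (h + 1) = k}

/-!
A tree of height `h + 1` with `k` nodes at depth `h + 1` is determined by its pruning at depth `h`
(`prune`), a tree of height `h` with some number `m ≥ 1` of nodes at depth `h`, together with the
numbers of children of these `m` nodes (`harvest`), a list of length `m` summing to `k`; grafting
the leaves back (`graft`) inverts this. By stars and bars there are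
`C(m + k - 1, k) = C(m + k - 1, m - 1)` such lists.
-/

lemma _root_.List.splitLengths_map_length_flatten {α : Type*} (L : List (List α)) :
    (L.map List.length).splitLengths L.flatten = L := by
  induction L with
  | nil => rfl
  | cons l L ih => simp [List.splitLengths_cons, ih]

noncomputable def compositionsEquivSym (m k : ℕ) :
    {ks : List ℕ // ks.length = m ∧ ks.sum = k} ≃ Sym (Fin m) k :=
  calc {ks : List ℕ // ks.length = m ∧ ks.sum = k}
      ≃ {v : List.Vector ℕ m // v.toList.sum = k} :=
        (Equiv.subtypeSubtypeEquivSubtypeInter (α := List ℕ) (·.length = m) (·.sum = k)).symm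
    _ ≃ {f : Fin m → ℕ // ∑ i, f i = k} :=
        (Equiv.vectorEquivFin ℕ m).subtypeEquiv fun v => by
          rw [show Equiv.vectorEquivFin ℕ m v = v.get from rfl, ← List.sum_ofFn,
            ← List.Vector.toList_ofFn, List.Vector.ofFn_get]
    _ ≃ Sym (Fin m) k := (Sym.equivNatSumOfFintype (Fin m) k).symm

instance finite_subtype_length_sum (m k : ℕ) :
    Finite {ks : List ℕ // ks.length = m ∧ ks.sum = k} :=
  .of_equiv _ (compositionsEquivSym m k).symm

lemma card_compositions (m k : ℕ) :
    Nat.card {ks : List ℕ // ks.length = m ∧ ks.sum = k} = (m + k - 1).choose k := by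
  rw [Nat.card_congr (compositionsEquivSym m k), Nat.card_eq_fintype_card, Sym.card_sym_eq_choose,
    Fintype.card_fin]

namespace PTree

@[simp] lemma size_node (cs : List PTree) : (node cs).size = 1 + (cs.map size).sum := by
  rw [size, List.attach_map_val]

lemma height_node (cs : List PTree) :
    (node cs).height = (cs.map (·.height + 1)).foldr max 0 := by
  simp [height]

@[simp] lemma countDepth_zero (t : PTree) : t.countDepth 0 = 1 := by
  cases t; rw [countDepth]

@[simp] lemma countDepth_succ (cs : List PTree) (d : ℕ) :
    (node cs).countDepth (d + 1) = (cs.map (·.countDepth d)).sum := by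
  simp [countDepth]

lemma height_node_le_iff {cs : List PTree} {b : ℕ} :
    (node cs).height ≤ b ↔ ∀ c ∈ cs, c.height + 1 ≤ b := by
  rw [height_node]
  induction cs <;> simp_all

lemma height_lt_of_mem {c : PTree} {cs : List PTree} (h : c ∈ cs) :
    c.height < (node cs).height :=
  height_node_le_iff.1 le_rfl c h

lemma height_eq_zero_iff {t : PTree} : t.height = 0 ↔ t = node [] := by
  obtain ⟨cs⟩ := t
  rw [← Nat.le_zero, height_node_le_iff]
  simp [List.eq_nil_iff_forall_not_mem]

lemma countDepth_pos_iff {t : PTree} {d : ℕ} : 0 < t.countDepth d ↔ d ≤ t.height := by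
  induction d generalizing t with
  | zero => simp
  | succ d ih =>
    obtain ⟨cs⟩ := t
    rw [← not_iff_not, not_lt, not_le, Nat.lt_succ_iff, height_node_le_iff, nonpos_iff_eq_zero,
      countDepth_succ, List.sum_eq_zero_iff, List.forall_mem_map]
    refine forall₂_congr fun c _ => ?_
    rw [← Nat.lt_iff_add_one_le, ← not_le, ← ih, not_lt, Nat.le_zero]

lemma countDepth_le_size (t : PTree) (d : ℕ) : t.countDepth d ≤ t.size := by
  induction d generalizing t with
  | zero => cases t; simp
  | succ d ih =>
    obtain ⟨cs⟩ := t
    simpa [Nat.add_comm 1] using Nat.le_succ_of_le (List.sum_le_sum fun c _ => ih c)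

lemma countDepth_succ_lt_size (t : PTree) (d : ℕ) : t.countDepth (d + 1) < t.size := by
  obtain ⟨cs⟩ := t
  simpa [Nat.add_comm 1, Nat.lt_succ_iff] using List.sum_le_sum fun c _ => countDepth_le_size c d

lemma one_le_size (t : PTree) : 1 ≤ t.size := by
  cases t; simp

lemma length_le_sum_size (cs : List PTree) : cs.length ≤ (cs.map size).sum := by
  simpa using List.length_le_sum_of_one_le (cs.map size) (by simp [one_le_size])

lemma finite_setOf_size_le (N : ℕ) : {t : PTree | t.size ≤ N}.Finite := by
  induction N with
  | zero => convert Set.finite_empty; ext ⟨cs⟩; simp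
  | succ N ih =>
    have := ih.to_subtype
    refine ((List.finite_length_le {t : PTree | t.size ≤ N} N).image
      fun l => node (l.map Subtype.val)).subset ?_
    rintro ⟨cs⟩ hcs
    replace hcs : (cs.map size).sum ≤ N := by simp at hcs; omega
    have hlen := (length_le_sum_size cs).trans hcs
    lift cs to List {t : PTree | t.size ≤ N} using fun c hc =>
      (List.le_sum_of_mem (List.mem_map_of_mem hc)).trans hcs
    exact ⟨cs, by simpa using hlen, rfl⟩

instance finite_subtype_size_eq (n : ℕ) (p : PTree → Prop) :
    Finite {t : PTree // t.size = n ∧ p t} :=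
  ((finite_setOf_size_le n).subset fun _ ht => ht.1.le).to_subtype

def prune : ℕ → PTree → PTree
  | 0, _ => node []
  | d + 1, node cs => node (cs.map (prune d))

def harvest : ℕ → PTree → List ℕ
  | 0, node cs => [cs.length]
  | d + 1, node cs => (cs.map (harvest d)).flatten

/-- Below the `i`-th node at depth `d` of `t` (left to right), attach `ks[i]` leaves. -/
def graft : ℕ → PTree → List ℕ → PTree
  | 0, _, ks => node (List.replicate ks.sum (node []))
  | d + 1, node ts, ks =>
    node (List.zipWith (graft d) ts ((ts.map (·.countDepth d)).splitLengths ks))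

lemma height_prune_le (d : ℕ) (t : PTree) : (prune d t).height ≤ d := by
  induction d generalizing t with
  | zero => simp [prune, height_node]
  | succ d ih =>
    obtain ⟨cs⟩ := t
    simpa [prune, height_node_le_iff] using fun c _ => ih c

lemma countDepth_prune {e d : ℕ} (h : e ≤ d) (t : PTree) :
    (prune d t).countDepth e = t.countDepth e := by
  induction e generalizing d t with
  | zero => simp
  | succ e ih =>
    obtain ⟨d, rfl⟩ := Nat.exists_eq_add_of_le' (Nat.one_le_of_lt h)
    obtain ⟨cs⟩ := t
    simp [prune, Function.comp_def, ih (Nat.le_of_succ_le_succ h)]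

lemma height_prune {d : ℕ} {t : PTree} (h : d ≤ t.height) : (prune d t).height = d :=
  (height_prune_le d t).antisymm <| countDepth_pos_iff.1 <| by
    rw [countDepth_prune le_rfl]; exact countDepth_pos_iff.2 h

lemma size_prune_add_countDepth {d : ℕ} {t : PTree} (h : t.height ≤ d + 1) :
    (prune d t).size + t.countDepth (d + 1) = t.size := by
  induction d generalizing t with
  | zero =>
    obtain ⟨cs⟩ := t
    have : ∀ c ∈ cs, c.size = 1 := fun c hc => by
      rw [height_eq_zero_iff.1 (by have := height_lt_of_mem hc; omega : c.height = 0)]; simp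
    simp [prune, List.map_congr_left this]
  | succ d ih =>
    obtain ⟨cs⟩ := t
    have : ∀ c ∈ cs, (prune d c).size + c.countDepth (d + 1) = c.size := fun c hc =>
      ih (by have := height_lt_of_mem hc; omega)
    simp [prune, Function.comp_def, ← List.map_congr_left this, List.sum_map_add]
    omega

lemma length_harvest (d : ℕ) (t : PTree) : (harvest d t).length = t.countDepth d := by
  induction d generalizing t with
  | zero => cases t; simp [harvest]
  | succ d ih => obtain ⟨cs⟩ := t; simp [harvest, Function.comp_def, ih]

lemma sum_harvest (d : ℕ) (t : PTree) : (harvest d t).sum = t.countDepth (d + 1) := by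
  induction d generalizing t with
  | zero => obtain ⟨cs⟩ := t; simp [harvest]
  | succ d ih => obtain ⟨cs⟩ := t; simp [harvest, List.sum_flatten, Function.comp_def, ih]

lemma height_graft_le (d : ℕ) (t : PTree) (ks : List ℕ) : (graft d t ks).height ≤ d + 1 := by
  induction d generalizing t ks with
  | zero =>
    rw [graft, height_node_le_iff]
    intro c hc
    simp [List.eq_of_mem_replicate hc, height_node]
  | succ d ih =>
    obtain ⟨ts⟩ := t
    rw [graft, height_node_le_iff]
    intro c hc
    obtain ⟨i, hi, rfl⟩ := List.mem_iff_getElem.1 hc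
    simpa using ih _ _

lemma graft_prune_harvest {d : ℕ} {t : PTree} (h : t.height ≤ d + 1) :
    graft d (prune d t) (harvest d t) = t := by
  induction d generalizing t with
  | zero =>
    obtain ⟨cs⟩ := t
    have : ∀ c ∈ cs, c = node [] := fun c hc =>
      height_eq_zero_iff.1 (by have := height_lt_of_mem hc; omega)
    simp only [harvest, graft, List.sum_singleton, node.injEq]
    exact (List.eq_replicate_iff.2 ⟨rfl, this⟩).symm
  | succ d ih =>
    obtain ⟨cs⟩ := t
    have hlen :
        (cs.map (prune d)).map (·.countDepth d) = (cs.map (harvest d)).map List.length := by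
      simp [Function.comp_def, countDepth_prune, length_harvest]
    simp only [prune, harvest, graft, hlen, List.splitLengths_map_length_flatten, List.zipWith_map,
      List.zipWith_self, node.injEq]
    exact (List.map_congr_left fun c hc => ih (by have := height_lt_of_mem hc; omega)).trans
      (List.map_id' cs)

lemma prune_graft_and_harvest_graft {d : ℕ} {t : PTree} {ks : List ℕ} (ht : t.height ≤ d)
    (hks : ks.length = t.countDepth d) :
    prune d (graft d t ks) = t ∧ harvest d (graft d t ks) = ks := by
  induction d generalizing t ks with
  | zero =>
    obtain rfl := height_eq_zero_iff.1 (Nat.le_zero.1 ht)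
    obtain ⟨k, rfl⟩ := List.length_eq_one_iff.1 (by simpa using hks)
    simp [graft, prune, harvest]
  | succ d ih =>
    obtain ⟨ts⟩ := t
    simp only [graft, prune, harvest, node.injEq]
    rw [height_node_le_iff] at ht
    rw [countDepth_succ] at hks
    induction ts generalizing ks with
    | nil => simpa using hks
    | cons t ts ihts =>
      simp only [List.map_cons, List.sum_cons] at hks
      obtain ⟨h1, h2⟩ := ih (ks := ks.take (t.countDepth d))
        (by simpa using ht t (by simp)) (by simp; omega)
      obtain ⟨h3, h4⟩ := ihts (ks := ks.drop (t.countDepth d))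
        (fun c hc => ht c (by simp [hc])) (by simp; omega)
      simp only [List.splitLengths_cons, List.zipWith_cons_cons, List.map_cons, List.flatten_cons,
        h1, h2, h3, h4, List.take_append_drop, and_self]

section graft

variable {d : ℕ} {t : PTree} {ks : List ℕ}

lemma prune_graft (ht : t.height ≤ d) (hks : ks.length = t.countDepth d) :
    prune d (graft d t ks) = t :=
  (prune_graft_and_harvest_graft ht hks).1

lemma harvest_graft (ht : t.height ≤ d) (hks : ks.length = t.countDepth d) :
    harvest d (graft d t ks) = ks :=
  (prune_graft_and_harvest_graft ht hks).2

lemma countDepth_graft_succ (ht : t.height ≤ d) (hks : ks.length = t.countDepth d) :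
    (graft d t ks).countDepth (d + 1) = ks.sum := by
  rw [← sum_harvest, harvest_graft ht hks]

lemma countDepth_graft (ht : t.height ≤ d) (hks : ks.length = t.countDepth d) :
    (graft d t ks).countDepth d = t.countDepth d := by
  rw [← countDepth_prune le_rfl, prune_graft ht hks]

lemma size_graft (ht : t.height ≤ d) (hks : ks.length = t.countDepth d) :
    (graft d t ks).size = t.size + ks.sum := by
  rw [← size_prune_add_countDepth (height_graft_le d t ks), prune_graft ht hks,
    countDepth_graft_succ ht hks]

end graft

noncomputable def pruneHarvestEquiv (d n k : ℕ) (hk : 1 ≤ k) :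
    {G : PTree // G.size = n + k + 1 ∧ G.height = d + 1 + 1 ∧ G.countDepth (d + 1 + 1) = k} ≃
      Σ m : Finset.Icc 1 n, {T : PTree // T.size = n + 1 ∧ T.height = d + 1 ∧
        T.countDepth (d + 1) = m} × {ks : List ℕ // ks.length = m ∧ ks.sum = k} where
  toFun := fun ⟨G, hsize, hheight, hk⟩ =>
    have hprune := size_prune_add_countDepth hheight.le
    have hlt := countDepth_prune (t := G) le_rfl ▸ countDepth_succ_lt_size (prune (d + 1) G) d
    ⟨⟨G.countDepth (d + 1), Finset.mem_Icc.2 ⟨countDepth_pos_iff.2 (by omega), by omega⟩⟩,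
      ⟨prune (d + 1) G, by omega, height_prune (by omega), countDepth_prune le_rfl _⟩,
      ⟨harvest (d + 1) G, length_harvest _ _, (sum_harvest _ _).trans hk⟩⟩
  invFun := fun ⟨_, ⟨T, hTsize, hTheight, hTcount⟩, ⟨ks, hlength, hsum⟩⟩ =>
    have hks := hlength.trans hTcount.symm
    ⟨graft (d + 1) T ks, by rw [size_graft hTheight.le hks, hTsize, hsum]; ring,
      (height_graft_le _ _ _).antisymm <| countDepth_pos_iff.1 <| by
        rw [countDepth_graft_succ hTheight.le hks, hsum]; exact hk,
      (countDepth_graft_succ hTheight.le hks).trans hsum⟩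
  left_inv := fun ⟨_, _, hheight, _⟩ => Subtype.ext (graft_prune_harvest hheight.le)
  right_inv := by
    rintro ⟨⟨m, hm⟩, ⟨T, hTsize, hTheight, hTcount⟩, ⟨ks, hlength, hsum⟩⟩
    have hks := hlength.trans hTcount.symm
    obtain rfl : (graft (d + 1) T ks).countDepth (d + 1) = m := by
      rw [countDepth_graft hTheight.le hks, hTcount]
    simp only [prune_graft hTheight.le hks, harvest_graft hTheight.le hks]

end PTree

theorem statement2 (n h k : ℕ) (hh : 1 ≤ h) (hk1 : 1 ≤ k) (hkn : k ≤ n) :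
    t n h k = ∑ m ∈ Finset.Icc 1 (n - k), (m + k - 1).choose (m - 1) * t (n - k) (h - 1) m := by
  obtain ⟨d, rfl⟩ := Nat.exists_eq_add_of_le' hh
  obtain ⟨q, rfl⟩ := Nat.exists_eq_add_of_le' hkn
  rw [Nat.add_sub_cancel, Nat.add_sub_cancel, t, Nat.card_congr (PTree.pruneHarvestEquiv d q k hk1),
    Nat.card_sigma, ← Finset.sum_coe_sort (Finset.Icc 1 q)]
  refine Fintype.sum_congr _ _ fun ⟨m, hm⟩ => ?_
  have hm1 := (Finset.mem_Icc.1 hm).1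
  rw [Nat.card_prod, card_compositions, mul_comm, t,
    Nat.choose_symm_of_eq_add (show m + k - 1 = k + (m - 1) by omega)]

end Paper
end

section
/- Let f(n,h,k) be the number of nonisomorphic n-element semiorders of length h with exactly k elements on the last ((h+1)-th) level. Then for h ≥ 1, f(n,h,k) = Σ_{m=1}^{n-k} C(m+k−1, m−1) · f(n−k, h−1, m). -/
/-!
Every finite semiorder is isomorphic to exactly one canonical semiorder on `Fin n`: list the
points so that strict up-sets shrink and strict down-sets grow (possible because in a semiorder
both families are chains, and a strictly smaller up-set forces a larger down-set), and then
`a < b ↔ r a ≤ b`, where `r a` is the number of points not above `a`. In this form the level of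
`i` is one more than the level of `r i`, so the last level is an initial segment `{0, …, k-1}`.
Deleting it leaves a canonical semiorder of length `h - 1` whose last level is again an initial
segment `{0, …, m-1}`, and the deleted points are recorded by the monotone map
`i ↦ r i - k : Fin k → Fin m`; conversely every such map re-attaches `k` points. There are
`C(m+k-1, k) = C(m+k-1, m-1)` such maps (stars and bars, `s ↦ (i ↦ s i + i)`).
-/

namespace Paper

/-- The number of elements of the poset `P` on level `i`. -/
noncomputable def levCount (n : ℕ) (P : PartialOrder (Fin n)) (i : ℕ) : ℕ :=
  Nat.card {a : Fin n // @OnLevel (Fin n) P.toPreorder a i}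

/-- `f(n,h,k)`: the number of nonisomorphic `n`-element semiorders of length `h`
with exactly `k` elements on the last (`(h+1)`-th) level. -/
noncomputable def f (n h k : ℕ) : ℕ :=
  countPosets n (fun P => SemiLen n h P ∧ levCount n P (h + 1) = k)

section Chains

variable {α β : Type*} [Preorder α] [Preorder β]

lemma hasChainAbove_zero (a : α) : HasChainAbove a 0 :=
  ⟨Fin.elim0, fun i => i.elim0, fun i => i.elim0⟩

lemma hasChainAbove_succ_iff {a : α} {t : ℕ} :
    HasChainAbove a (t + 1) ↔ ∃ b, a < b ∧ HasChainAbove b t := by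
  constructor
  · rintro ⟨c, hc, hac⟩
    exact ⟨c 0, hac 0, Fin.tail c, hc.comp Fin.strictMono_succ, fun j => hc (Fin.succ_pos j)⟩
  · rintro ⟨b, hab, c, hc, hbc⟩
    exact ⟨Fin.cons b c, Fin.strictMono_cons.2 ⟨hbc, hc⟩,
      Fin.cases hab fun j => hab.trans (hbc j)⟩

lemma hasChain_succ_iff {t : ℕ} : HasChain α (t + 1) ↔ ∃ a : α, HasChainAbove a t := by
  constructor
  · rintro ⟨c, hc⟩
    exact ⟨c 0, Fin.tail c, hc.comp Fin.strictMono_succ, fun j => hc (Fin.succ_pos j)⟩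
  · rintro ⟨a, c, hc, hac⟩
    exact ⟨Fin.cons a c, Fin.strictMono_cons.2 ⟨hac, hc⟩⟩

lemma HasChain.map {f : α → β} (hf : StrictMono f) {k : ℕ} : HasChain α k → HasChain β k
  | ⟨c, hc⟩ => ⟨f ∘ c, hf.comp hc⟩

lemma HasChainAbove.map {f : α → β} (hf : StrictMono f) {a : α} {k : ℕ} :
    HasChainAbove a k → HasChainAbove (f a) k
  | ⟨c, hc, hac⟩ => ⟨f ∘ c, hf.comp hc, fun j => hf (hac j)⟩

end Chains

section OrderIso

variable {α β : Type*} [PartialOrder α] [PartialOrder β]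

lemma IsSemiorder.of_orderEmbedding (e : α ↪o β) (hβ : IsSemiorder β) : IsSemiorder α := by
  have incomp {a b : α} : Incomp (e a) (e b) ↔ Incomp a b := by simp only [Incomp, e.le_iff_le]
  constructor
  · rintro ⟨x, y, z, w, hyx, hwz, hxz, hxw, hyz, hyw⟩
    exact hβ.1 ⟨e x, e y, e z, e w, e.lt_iff_lt.2 hyx, e.lt_iff_lt.2 hwz,
      incomp.2 hxz, incomp.2 hxw, incomp.2 hyz, incomp.2 hyw⟩
  · rintro ⟨x, y, z, w, hzy, hyx, hxw, hyw, hzw⟩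
    exact hβ.2 ⟨e x, e y, e z, e w, e.lt_iff_lt.2 hzy, e.lt_iff_lt.2 hyx,
      incomp.2 hxw, incomp.2 hyw, incomp.2 hzw⟩

lemma hasChainAbove_orderIso_iff (e : α ≃o β) {a : α} {k : ℕ} :
    HasChainAbove (e a) k ↔ HasChainAbove a k :=
  ⟨fun h => by simpa using h.map e.symm.strictMono, fun h => h.map e.strictMono⟩

lemma onLevel_orderIso_iff (e : α ≃o β) {a : α} {i : ℕ} :
    OnLevel (e a) i ↔ OnLevel a i := by
  simp only [OnLevel, hasChainAbove_orderIso_iff]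

lemma hasLength_orderIso_iff (e : α ≃o β) {H : ℕ} : HasLength β H ↔ HasLength α H := by
  have hchain (k : ℕ) : HasChain β k ↔ HasChain α k :=
    ⟨HasChain.map e.symm.strictMono, HasChain.map e.strictMono⟩
  simp only [HasLength, hchain]

lemma semiLen_levCount_of_orderIso {n h k : ℕ} {P Q : PartialOrder (Fin n)}
    (e : @OrderIso (Fin n) (Fin n) P.toLE Q.toLE)
    (hP : SemiLen n h P ∧ levCount n P (h + 1) = k) :
    SemiLen n h Q ∧ levCount n Q (h + 1) = k := by
  obtain ⟨⟨hsemi, hlen⟩, hcount⟩ := hP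
  refine ⟨⟨@IsSemiorder.of_orderEmbedding _ _ Q P (RelIso.symm e).toRelEmbedding hsemi,
    (@hasLength_orderIso_iff _ _ P Q e h).2 hlen⟩, hcount ▸ (Nat.card_congr ?_).symm⟩
  exact Equiv.subtypeEquiv e.toEquiv fun a => (@onLevel_orderIso_iff _ _ P Q e a _).symm

end OrderIso

section Trace

variable {α : Type*} [PartialOrder α]

lemma IsSemiorder.Ioi_total (hα : IsSemiorder α) (a b : α) :
    Set.Ioi a ⊆ Set.Ioi b ∨ Set.Ioi b ⊆ Set.Ioi a := by
  by_contra! hcon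
  obtain ⟨x, hax, hbx⟩ := Set.not_subset.1 hcon.1
  obtain ⟨y, hby, hay⟩ := Set.not_subset.1 hcon.2
  simp only [Set.mem_Ioi] at hax hbx hby hay
  exact hα.1 ⟨x, a, y, b, hax, hby, ⟨by order, by order⟩, ⟨by order, by order⟩,
    ⟨by order, by order⟩, ⟨by order, by order⟩⟩

lemma IsSemiorder.Iio_total (hα : IsSemiorder α) (a b : α) :
    Set.Iio a ⊆ Set.Iio b ∨ Set.Iio b ⊆ Set.Iio a := by
  by_contra! hcon
  obtain ⟨x, hxa, hxb⟩ := Set.not_subset.1 hcon.1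
  obtain ⟨y, hyb, hya⟩ := Set.not_subset.1 hcon.2
  simp only [Set.mem_Iio] at hxa hxb hyb hya
  exact hα.1 ⟨a, x, b, y, hxa, hyb, ⟨by order, by order⟩, ⟨by order, by order⟩,
    ⟨by order, by order⟩, ⟨by order, by order⟩⟩

lemma IsSemiorder.Iio_subset_of_Ioi_ssubset (hα : IsSemiorder α) {a b : α}
    (h : Set.Ioi b ⊂ Set.Ioi a) : Set.Iio a ⊆ Set.Iio b := by
  obtain ⟨x, hax, hbx⟩ := Set.exists_of_ssubset h
  intro z hza
  by_contra hzb
  simp only [Set.mem_Ioi, Set.mem_Iio] at hax hbx hza hzb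
  exact hα.2 ⟨x, a, z, b, hza, hax, ⟨by order, by order⟩, ⟨by order, by order⟩,
    ⟨by order, by order⟩⟩

noncomputable def semiorderKey (a : α) : ℕᵒᵈ ×ₗ ℕ :=
  toLex (OrderDual.toDual (Set.Ioi a).ncard, (Set.Iio a).ncard)

lemma IsSemiorder.subset_of_semiorderKey_le [Finite α] (hα : IsSemiorder α) {a b : α}
    (h : semiorderKey a ≤ semiorderKey b) :
    Set.Ioi b ⊆ Set.Ioi a ∧ Set.Iio a ⊆ Set.Iio b := by
  simp only [semiorderKey, Prod.Lex.toLex_le_toLex, OrderDual.toDual_lt_toDual,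
    OrderDual.toDual_inj] at h
  have hIoi : Set.Ioi b ⊆ Set.Ioi a := by
    rcases hα.Ioi_total a b with hab | hba
    · rw [Set.eq_of_subset_of_ncard_le hab (by omega)]
    · exact hba
  refine ⟨hIoi, ?_⟩
  rcases hIoi.eq_or_ssubset with heq | hss
  · have hcard : (Set.Iio a).ncard ≤ (Set.Iio b).ncard := by
      rw [heq] at h
      omega
    rcases hα.Iio_total a b with hab | hba
    · exact hab
    · rw [Set.eq_of_subset_of_ncard_le hba hcard]
  · exact hα.Iio_subset_of_Ioi_ssubset hss

end Trace

@[ext]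
structure CanonSemiorder (n : ℕ) where
  r : Fin n → ℕ
  monotone_r : Monotone r
  lt_r : ∀ i : Fin n, (i : ℕ) < r i
  r_le : ∀ i, r i ≤ n

namespace CanonSemiorder

variable {n : ℕ} (c : CanonSemiorder n)

instance : Finite (CanonSemiorder n) :=
  Finite.of_injective
    (fun c : CanonSemiorder n => fun i => (⟨c.r i, Nat.lt_succ_of_le (c.r_le i)⟩ : Fin (n + 1)))
    fun _ _ h => CanonSemiorder.ext (funext fun i => congrArg Fin.val (congrFun h i))

abbrev toPartialOrder : PartialOrder (Fin n) where
  le a b := a = b ∨ c.r a ≤ b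
  lt a b := c.r a ≤ b
  le_refl _ := Or.inl rfl
  le_trans a b d := by
    have := c.lt_r b
    rintro (rfl | hab) (rfl | hbd) <;> first | exact Or.inl rfl | exact Or.inr (by omega)
  le_antisymm a b := by
    have := c.lt_r a
    have := c.lt_r b
    rintro (rfl | hab) (hba | hba) <;> first | rfl | exact hba.symm | omega
  lt_iff_le_not_ge a b := by
    have := c.lt_r a
    have := c.lt_r b
    simp only [Fin.ext_iff]
    omega

lemma lt_iff {a b : Fin n} : c.toPartialOrder.lt a b ↔ c.r a ≤ b := Iff.rfl

lemma le_iff {a b : Fin n} : c.toPartialOrder.le a b ↔ a = b ∨ c.r a ≤ b := Iff.rfl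

theorem isSemiorder : @IsSemiorder (Fin n) c.toPartialOrder := by
  constructor
  · rintro ⟨x, y, z, w, hyx, hwz, -, hxw, hyz, -⟩
    rcases le_total y w with hyw | hwy
    · exact hyz.1 (Or.inr ((c.monotone_r hyw).trans hwz))
    · exact hxw.2 (Or.inr ((c.monotone_r hwy).trans hyx))
  · rintro ⟨x, y, z, w, hzy, hyx, hxw, -, hzw⟩
    have hwz : (w : ℕ) < c.r z := not_le.1 fun h => hzw.1 (Or.inr h)
    have hwy : w ≤ y := Fin.le_def.2 (by rw [c.lt_iff] at hzy; omega)
    exact hxw.2 (Or.inr ((c.monotone_r hwy).trans hyx))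

def level (c : CanonSemiorder n) (i : ℕ) : ℕ :=
  if h : i < n then c.level (c.r ⟨i, h⟩) + 1 else 0
termination_by n - i
decreasing_by have : i < c.r ⟨i, h⟩ := c.lt_r ⟨i, h⟩; omega

lemma level_of_lt {i : ℕ} (h : i < n) : c.level i = c.level (c.r ⟨i, h⟩) + 1 := by
  rw [level.eq_1, dif_pos h]

lemma level_of_le {i : ℕ} (h : n ≤ i) : c.level i = 0 := by
  rw [level.eq_1, dif_neg (not_lt.2 h)]

lemma level_fin (i : Fin n) : c.level i = c.level (c.r i) + 1 := c.level_of_lt i.2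

lemma level_pos_iff {i : ℕ} : 0 < c.level i ↔ i < n := by
  refine ⟨fun h => ?_, fun h => by rw [c.level_of_lt h]; omega⟩
  by_contra hi
  rw [c.level_of_le (not_lt.1 hi)] at h
  exact h.false

lemma level_le_level (c : CanonSemiorder n) {i j : ℕ} (hij : i ≤ j) :
    c.level j ≤ c.level i := by
  rcases lt_or_ge j n with hj | hj
  · have hi : i < n := hij.trans_lt hj
    rw [c.level_of_lt hi, c.level_of_lt hj]
    have := c.level_le_level (c.monotone_r (show (⟨i, hi⟩ : Fin n) ≤ ⟨j, hj⟩ from hij))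
    omega
  · rw [c.level_of_le hj]
    exact Nat.zero_le _
termination_by n - i
decreasing_by have : i < c.r ⟨i, hi⟩ := c.lt_r ⟨i, hi⟩; omega

theorem level_antitone : Antitone c.level := fun _ _ => c.level_le_level

lemma level_le_level_zero (i : ℕ) : c.level i ≤ c.level 0 := c.level_antitone (Nat.zero_le i)

lemma hasChainAbove_iff_lt_level (x : Fin n) (t : ℕ) :
    @HasChainAbove _ c.toPartialOrder.toPreorder x t ↔ t < c.level x := by
  let _ := c.toPartialOrder
  induction t generalizing x with
  | zero => simpa [c.level_fin x] using hasChainAbove_zero x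
  | succ t ih =>
    rw [hasChainAbove_succ_iff, c.level_fin x]
    constructor
    · rintro ⟨y, hxy, hy⟩
      have := c.level_antitone (c.lt_iff.1 hxy)
      have := (ih y).1 hy
      omega
    · intro ht
      have hr : c.r x < n := c.level_pos_iff.1 (by omega)
      exact ⟨⟨c.r x, hr⟩, c.lt_iff.2 le_rfl, (ih _).2 (by simpa using ht)⟩

lemma onLevel_iff_level_eq (x : Fin n) (i : ℕ) :
    @OnLevel _ c.toPartialOrder.toPreorder x i ↔ c.level x = i := by
  unfold OnLevel
  rw [c.hasChainAbove_iff_lt_level, c.hasChainAbove_iff_lt_level]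
  have := c.level_pos_iff.2 x.2
  omega

lemma hasChain_succ_iff_lt_level (t : ℕ) :
    @HasChain _ c.toPartialOrder.toPreorder (t + 1) ↔ t < c.level 0 := by
  let _ := c.toPartialOrder
  rw [hasChain_succ_iff]
  constructor
  · rintro ⟨x, hx⟩
    exact ((c.hasChainAbove_iff_lt_level x t).1 hx).trans_le (c.level_le_level_zero x)
  · intro ht
    exact ⟨⟨0, c.level_pos_iff.1 (by omega)⟩, (c.hasChainAbove_iff_lt_level _ t).2 ht⟩

lemma semiLen_iff (h : ℕ) : SemiLen n h c.toPartialOrder ↔ c.level 0 = h + 1 := by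
  simp only [SemiLen, HasLength, hasChain_succ_iff_lt_level, c.isSemiorder, true_and]
  omega

noncomputable def levelCard (i : ℕ) : ℕ := Nat.card {a : Fin n // c.level a = i}

lemma levCount_eq (i : ℕ) : levCount n c.toPartialOrder i = c.levelCard i :=
  Nat.card_congr (Equiv.subtypeEquivRight fun a => c.onLevel_iff_level_eq a i)

lemma levelCard_le (i : ℕ) : c.levelCard i ≤ n := by
  simpa [levelCard] using Finite.card_subtype_le fun a : Fin n => c.level a = i

lemma levelCard_eq_of_forall_iff {i k : ℕ} (hk : k ≤ n)
    (H : ∀ a : Fin n, c.level a = i ↔ (a : ℕ) < k) : c.levelCard i = k := by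
  rw [levelCard, Nat.card_congr (Equiv.subtypeEquivRight H), Nat.card_eq_fintype_card,
    Fintype.card_subtype, Fin.card_filter_val_lt, min_eq_right hk]

end CanonSemiorder

section CanonicalForm

open Finset

variable {α : Type*} [PartialOrder α]

theorem exists_canonSemiorder_of_sorted {n : ℕ} (x : Fin n ≃ α)
    (hx : ∀ ⦃i j⦄, i ≤ j →
      Set.Ioi (x j) ⊆ Set.Ioi (x i) ∧ Set.Iio (x i) ⊆ Set.Iio (x j)) :
    ∃ c : CanonSemiorder n, ∀ i j, x i < x j ↔ c.r i ≤ j := by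
  classical
  have hbelow (i j : Fin n) : (j : ℕ) < #{l | ¬ x i < x l} ↔ ¬ x i < x j :=
    Fin.lt_card_filter_univ_iff_apply_of_imp (fun l => ¬ x i < x l)
      fun _ _ hle hl hlt => hl ((hx hle).2 hlt)
  refine ⟨⟨fun i => #{l | ¬ x i < x l}, fun i i' hii' => card_le_card fun l => ?_,
    fun i => (hbelow i i).2 (lt_irrefl _), fun _ => card_finset_fin_le _⟩,
    fun i j => by rw [← not_lt, hbelow, not_not]⟩
  simp only [mem_filter, mem_univ, true_and]
  exact fun hl hlt => hl ((hx hii').1 hlt)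

theorem IsSemiorder.exists_sorted [Fintype α] (hα : IsSemiorder α) {n : ℕ}
    (hn : Fintype.card α = n) :
    ∃ x : Fin n ≃ α, ∀ ⦃i j⦄, i ≤ j →
      Set.Ioi (x j) ⊆ Set.Ioi (x i) ∧ Set.Iio (x i) ⊆ Set.Iio (x j) := by
  let d : Fin n ≃ α := (Fintype.equivFinOfCardEq hn).symm
  exact ⟨(Tuple.sort (semiorderKey ∘ d)).trans d,
    fun i j hij => hα.subset_of_semiorderKey_le (Tuple.monotone_sort (semiorderKey ∘ d) hij)⟩

theorem IsSemiorder.exists_orderIso [Fintype α] (hα : IsSemiorder α) {n : ℕ}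
    (hn : Fintype.card α = n) :
    ∃ c : CanonSemiorder n, Nonempty (@OrderIso (Fin n) α c.toPartialOrder.toLE _) := by
  obtain ⟨x, hx⟩ := hα.exists_sorted hn
  obtain ⟨c, hc⟩ := exists_canonSemiorder_of_sorted x hx
  refine ⟨c, ⟨x, fun {i j} => ?_⟩⟩
  rw [le_iff_lt_or_eq, hc, x.injective.eq_iff, or_comm]
  exact c.le_iff.symm

end CanonicalForm

namespace CanonSemiorder

open Finset

variable {n : ℕ}

open Classical in
lemma r_eq_card (c : CanonSemiorder n) (a : Fin n) :
    c.r a = #{b | ¬ c.toPartialOrder.lt a b} := by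
  simp only [c.lt_iff, not_le, Fin.card_filter_val_lt]
  exact (min_eq_right (c.r_le a)).symm

theorem eq_of_orderIso {c c' : CanonSemiorder n}
    (e : @OrderIso (Fin n) (Fin n) c.toPartialOrder.toLE c'.toPartialOrder.toLE) : c = c' := by
  have hr : c'.r ∘ e.toEquiv = c.r := funext fun a => by
    rw [Function.comp_apply, c.r_eq_card, c'.r_eq_card]
    refine (card_equiv e.toEquiv fun b => ?_).symm
    simp only [mem_filter, mem_univ, true_and]
    exact not_congr
      (@OrderIso.lt_iff_lt _ _ c.toPartialOrder.toPreorder c'.toPartialOrder.toPreorder e a b).symm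
  have := Tuple.unique_monotone (f := c'.r) (σ := e.toEquiv) (τ := Equiv.refl _)
    (hr ▸ c.monotone_r) c'.monotone_r
  ext1
  rw [← hr, this]
  rfl

end CanonSemiorder

theorem countPosets_eq_card {n : ℕ} (pred : PartialOrder (Fin n) → Prop)
    (hsemi : ∀ P, pred P → @IsSemiorder (Fin n) P)
    (hiso : ∀ P Q : PartialOrder (Fin n),
      @OrderIso (Fin n) (Fin n) P.toLE Q.toLE → pred P → pred Q) :
    countPosets n pred = Nat.card {c : CanonSemiorder n // pred c.toPartialOrder} := by
  let rel (P Q : {P : PartialOrder (Fin n) // pred P}) : Prop := ∃ e : Fin n ≃ Fin n,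
    ∀ a b, (@LE.le _ P.1.toPreorder.toLE a b ↔ @LE.le _ Q.1.toPreorder.toLE (e a) (e b))
  have hrel : Equivalence rel :=
    ⟨fun _ => ⟨Equiv.refl _, fun _ _ => Iff.rfl⟩,
     fun ⟨e, he⟩ => ⟨e.symm, fun a b => by simpa using (he (e.symm a) (e.symm b)).symm⟩,
     fun ⟨e, he⟩ ⟨e', he'⟩ =>
      ⟨e.trans e', fun a b => (he a b).trans (he' (e a) (e b))⟩⟩
  refine (Nat.card_eq_of_bijective
    (fun c : {c : CanonSemiorder n // pred c.toPartialOrder} =>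
      Quot.mk rel ⟨c.1.toPartialOrder, c.2⟩)
    ⟨fun c c' hcc => ?_, Quot.ind fun ⟨P, hP⟩ => ?_⟩).symm
  · obtain ⟨e, he⟩ := hrel.eqvGen_iff.1 (Quot.eqvGen_exact hcc)
    exact Subtype.ext (CanonSemiorder.eq_of_orderIso ⟨e, (he _ _).symm⟩)
  · obtain ⟨c, ⟨e⟩⟩ :=
      @IsSemiorder.exists_orderIso (Fin n) P _ (hsemi P hP) n (Fintype.card_fin n)
    exact ⟨⟨c, hiso _ _ (RelIso.symm e) hP⟩,
      Quot.sound ⟨e.toEquiv, fun _ _ => e.map_rel_iff'.symm⟩⟩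

def CanonSemiorder.HasShape {n : ℕ} (c : CanonSemiorder n) (h k : ℕ) : Prop :=
  c.level 0 = h + 1 ∧ c.levelCard (h + 1) = k

theorem f_eq_card (n h k : ℕ) : f n h k = Nat.card {c : CanonSemiorder n // c.HasShape h k} := by
  rw [f, countPosets_eq_card _ (fun _ hP => hP.1.1) fun _ _ e => semiLen_levCount_of_orderIso e]
  exact Nat.card_congr (Equiv.subtypeEquivRight fun c => by
    rw [c.semiLen_iff, c.levCount_eq]
    rfl)

namespace CanonSemiorder

open Finset

variable {n h k m : ℕ}

section Shape

variable {c : CanonSemiorder n}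

lemma HasShape.le (hc : c.HasShape h k) : k ≤ n := hc.2 ▸ c.levelCard_le _

lemma HasShape.level_eq_iff (hc : c.HasShape h k) (i : ℕ) : c.level i = h + 1 ↔ i < k := by
  have htop (i : ℕ) : c.level i = h + 1 ↔ h + 1 ≤ c.level i := by
    have := c.level_le_level_zero i
    rw [hc.1] at this
    omega
  rcases lt_or_ge i n with hi | hi
  · have hcard : #{a : Fin n | h + 1 ≤ c.level a} = k := by
      simp only [← htop, ← hc.2, levelCard, Nat.card_eq_fintype_card, Fintype.card_subtype]
    have := Tuple.lt_card_ge_iff_apply_ge_of_antitone (j := ⟨i, hi⟩) (a := h + 1)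
      (f := fun a : Fin n => c.level a) fun a b hab => c.level_antitone hab
    rw [hcard] at this
    exact (htop i).trans this.symm
  · rw [c.level_of_le hi]
    have := hc.le
    omega

lemma HasShape.pos (hc : c.HasShape h k) : 0 < k := (hc.level_eq_iff 0).1 hc.1

lemma HasShape.le_r (hc : c.HasShape h k) (i : Fin n) : k ≤ c.r i := by
  by_contra! hlt
  have := c.level_le_level_zero i
  rw [c.level_fin, (hc.level_eq_iff _).2 hlt, hc.1] at this
  omega

end Shape

def drop (c : CanonSemiorder n) (k : ℕ) : CanonSemiorder (n - k) where
  r j := c.r ⟨j + k, Nat.add_lt_of_lt_sub j.2⟩ - k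
  monotone_r i j hij := Nat.sub_le_sub_right (c.monotone_r (Nat.add_le_add_right hij k)) k
  lt_r j := by
    have : (j : ℕ) + k < c.r ⟨j + k, Nat.add_lt_of_lt_sub j.2⟩ := c.lt_r ⟨j + k, _⟩
    omega
  r_le j := Nat.sub_le_sub_right (c.r_le _) k

lemma drop_r (c : CanonSemiorder n) (k : ℕ) (j : Fin (n - k)) :
    (c.drop k).r j = c.r ⟨j + k, Nat.add_lt_of_lt_sub j.2⟩ - k := rfl

lemma level_drop (c : CanonSemiorder n) (k j : ℕ) : (c.drop k).level j = c.level (j + k) := by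
  rcases lt_or_ge j (n - k) with hj | hj
  · have hjk : j + k < n := Nat.add_lt_of_lt_sub hj
    have hk : k ≤ c.r ⟨j + k, hjk⟩ := by
      have : j + k < c.r ⟨j + k, hjk⟩ := c.lt_r ⟨j + k, hjk⟩
      omega
    rw [level_of_lt _ hj, c.level_of_lt hjk, level_drop c k, drop_r, Nat.sub_add_cancel hk]
  · rw [level_of_le _ hj, c.level_of_le (by omega)]
termination_by n - k - j
decreasing_by
  have : j + k < c.r ⟨j + k, Nat.add_lt_of_lt_sub hj⟩ := c.lt_r ⟨j + k, _⟩
  dsimp only [drop_r, Fin.val_mk]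
  omega

def extendBelow (d : CanonSemiorder (n - k)) (s : Fin k → Fin m) (hs : Monotone s)
    (hkm : k + m ≤ n) (hm : ∀ j, m ≤ d.r j) : CanonSemiorder n where
  r i := if hi : (i : ℕ) < k then s ⟨i, hi⟩ + k else d.r ⟨i - k, by omega⟩ + k
  monotone_r i j hij := by
    have hij : (i : ℕ) ≤ j := hij
    dsimp only
    split_ifs with hi hj hj
    · have : s ⟨i, hi⟩ ≤ s ⟨j, hj⟩ := hs hij
      rw [Fin.le_def] at this
      omega
    · have := (s ⟨i, hi⟩).2
      have := hm ⟨j - k, by omega⟩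
      omega
    · omega
    · have := d.monotone_r
        (show (⟨i - k, by omega⟩ : Fin (n - k)) ≤ ⟨j - k, by omega⟩ from
          Fin.le_def.2 (by dsimp only; omega))
      omega
  lt_r i := by
    split_ifs with hi
    · omega
    · have : (i : ℕ) - k < d.r ⟨i - k, by omega⟩ := d.lt_r ⟨i - k, by omega⟩
      omega
  r_le i := by
    split_ifs with hi
    · have := (s ⟨i, hi⟩).2
      omega
    · have := d.r_le ⟨i - k, by omega⟩
      omega

section ExtendBelow

variable (d : CanonSemiorder (n - k)) (s : Fin k → Fin m) (hs : Monotone s)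
  (hkm : k + m ≤ n) (hm : ∀ j, m ≤ d.r j)

lemma extendBelow_r_of_lt (i : Fin n) (hi : (i : ℕ) < k) :
    (d.extendBelow s hs hkm hm).r i = s ⟨i, hi⟩ + k := dif_pos hi

lemma drop_extendBelow : (d.extendBelow s hs hkm hm).drop k = d := by
  ext j
  have hj : ¬ (j : ℕ) + k < k := by omega
  simp only [drop, extendBelow, hj, dite_false, Nat.add_sub_cancel]

lemma level_extendBelow_of_lt (i : Fin n) (hi : (i : ℕ) < k) :
    (d.extendBelow s hs hkm hm).level i = d.level (s ⟨i, hi⟩) + 1 := by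
  rw [level_fin, extendBelow_r_of_lt, ← level_drop, drop_extendBelow]

lemma level_extendBelow_add (j : ℕ) :
    (d.extendBelow s hs hkm hm).level (j + k) = d.level j := by
  rw [← level_drop, drop_extendBelow]

lemma hasShape_extendBelow (hh : 1 ≤ h) (hk : 0 < k) (hd : d.HasShape (h - 1) m) :
    (d.extendBelow s hs hkm hm).HasShape h k := by
  have hlast (i : Fin n) : (d.extendBelow s hs hkm hm).level i = h + 1 ↔ (i : ℕ) < k := by
    by_cases hi : (i : ℕ) < k
    · have := (hd.level_eq_iff (s ⟨i, hi⟩)).2 (s ⟨i, hi⟩).2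
      rw [level_extendBelow_of_lt _ _ _ _ _ _ hi, this]
      omega
    · have := d.level_le_level_zero (i - k)
      rw [hd.1, ← level_extendBelow_add d s hs hkm hm, Nat.sub_add_cancel (not_lt.1 hi)] at this
      omega
  exact ⟨(hlast ⟨0, by omega⟩).2 hk, levelCard_eq_of_forall_iff _ (by omega) hlast⟩

end ExtendBelow

section Shape

variable {c : CanonSemiorder n}

lemma HasShape.drop (hh : 1 ≤ h) (hc : c.HasShape h k) :
    (c.drop k).HasShape (h - 1) ((c.drop k).levelCard h) := by
  have hk1 : c.level (k - 1) = h + 1 := (hc.level_eq_iff _).2 (by have := hc.pos; omega)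
  have hkn : k - 1 < n := c.level_pos_iff.1 (by omega)
  rw [c.level_of_lt hkn] at hk1
  have hle := c.level_antitone (hc.le_r ⟨k - 1, hkn⟩)
  have hne := (hc.level_eq_iff k).not.2 (lt_irrefl k)
  have htop := c.level_le_level_zero k
  rw [hc.1] at htop
  refine ⟨?_, by rw [Nat.sub_add_cancel hh]⟩
  rw [level_drop, zero_add]
  omega

lemma HasShape.r_lt (hh : 1 ≤ h) (hc : c.HasShape h k) (i : Fin n) (hi : (i : ℕ) < k) :
    c.r i < k + (c.drop k).levelCard h := by
  have hri := (hc.level_eq_iff i).2 hi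
  rw [c.level_fin] at hri
  have hrn : c.r i < n := c.level_pos_iff.1 (by omega)
  have hd := (hc.drop hh).level_eq_iff (c.r i - k)
  rw [level_drop, Nat.sub_add_cancel (hc.le_r i), Nat.sub_add_cancel hh] at hd
  have := hd.1 (by omega)
  omega

lemma HasShape.add_le {d : CanonSemiorder (n - k)} (hd : d.HasShape (h - 1) m) : k + m ≤ n := by
  have := hd.le
  have : 0 < n - k := d.level_pos_iff.1 (by rw [hd.1]; omega)
  omega

end Shape

def shapeFiberEquiv (hh : 1 ≤ h) (hk : 0 < k) (m : ℕ) :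
    {c : CanonSemiorder n // c.HasShape h k ∧ (c.drop k).levelCard h = m} ≃
      {s : Fin k → Fin m // Monotone s} ×
        {d : CanonSemiorder (n - k) // d.HasShape (h - 1) m} where
  toFun c :=
    (⟨fun i => ⟨c.1.r ⟨i, i.2.trans_le c.2.1.le⟩ - k, by
        have := c.2.1.le_r ⟨i, i.2.trans_le c.2.1.le⟩
        have := c.2.1.r_lt hh ⟨i, i.2.trans_le c.2.1.le⟩ i.2
        omega⟩,
      fun i j hij =>
        Fin.mk_le_mk.2 (Nat.sub_le_sub_right (c.1.monotone_r (Fin.mk_le_mk.2 hij)) k)⟩,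
     ⟨c.1.drop k, by simpa only [c.2.2] using c.2.1.drop hh⟩)
  invFun p := ⟨p.2.1.extendBelow p.1.1 p.1.2 p.2.2.add_le p.2.2.le_r,
    hasShape_extendBelow _ _ _ _ _ hh hk p.2.2, by
      rw [drop_extendBelow]
      simpa only [Nat.sub_add_cancel hh] using p.2.2.2⟩
  left_inv c := by
    ext i
    have := c.2.1.le_r i
    by_cases hi : (i : ℕ) < k
    · simp only [extendBelow, hi, dite_true, Fin.eta]
      omega
    · simp only [extendBelow, hi, dite_false, drop_r, Nat.sub_add_cancel (not_lt.1 hi), Fin.eta]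
      omega
  right_inv p := by
    refine Prod.ext (Subtype.ext (funext fun i => Fin.ext ?_))
      (Subtype.ext (drop_extendBelow p.2.1 p.1.1 p.1.2 p.2.2.add_le p.2.2.le_r))
    simp [extendBelow]

end CanonSemiorder

section MonotoneCount

open Finset

lemma val_add_le_of_strictMono {k N : ℕ} {t : Fin k → Fin N} (ht : StrictMono t) {i j : Fin k}
    (hij : i ≤ j) : (t i : ℕ) + (j - i) ≤ t j := by
  obtain ⟨d, hd⟩ := Nat.exists_eq_add_of_le (Fin.le_def.1 hij)
  induction d generalizing j with
  | zero => simp [Fin.ext (hd.trans (add_zero _))]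
  | succ d ih =>
    have hmid : (i : ℕ) + d < k := by omega
    have h1 := ih (j := ⟨i + d, hmid⟩) (Fin.le_def.2 (by simp)) rfl
    have h2 := Fin.lt_def.1 (ht (show (⟨i + d, hmid⟩ : Fin k) < j from
      Fin.lt_def.2 (by simp only; omega)))
    simp only at h1
    omega

lemma le_val_of_strictMono {k N : ℕ} {t : Fin k → Fin N} (ht : StrictMono t) (i : Fin k) :
    (i : ℕ) ≤ t i := by
  have := val_add_le_of_strictMono ht
    (Fin.le_def.2 (Nat.zero_le i) : (⟨0, i.pos⟩ : Fin k) ≤ i)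
  simp only at this
  omega

def monotoneEquivStrictMono (k m : ℕ) :
    {s : Fin k → Fin m // Monotone s} ≃ {t : Fin k → Fin (m + k - 1) // StrictMono t} where
  toFun s := ⟨fun i => ⟨(s.1 i : ℕ) + i, by have := (s.1 i).2; have := i.2; omega⟩,
    fun i j hij => by
      have : s.1 i ≤ s.1 j := s.2 hij.le
      simp only [Fin.lt_def, Fin.le_def] at hij this ⊢
      omega⟩
  invFun t := ⟨fun i => ⟨(t.1 i : ℕ) - i, by
      have hlast : k - 1 < k := by have := i.2; omega
      have hgap := val_add_le_of_strictMono t.2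
        (Fin.le_def.2 (by simp only; omega) : i ≤ ⟨k - 1, hlast⟩)
      have := (t.1 ⟨k - 1, hlast⟩).2
      have := le_val_of_strictMono t.2 i
      simp only at hgap
      omega⟩,
    fun i j hij => by
      have := val_add_le_of_strictMono t.2 hij
      rw [Fin.le_def] at hij
      exact Fin.mk_le_mk.2 (by omega)⟩
  left_inv s := by
    ext i
    simp
  right_inv t := by
    ext i
    have := le_val_of_strictMono t.2 i
    simp only
    omega

def strictMonoEquivFinset (k N : ℕ) :
    {t : Fin k → Fin N // StrictMono t} ≃ {A : Finset (Fin N) // #A = k} where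
  toFun t := ⟨univ.image t.1, by rw [card_image_of_injective _ t.2.injective, card_fin]⟩
  invFun A := ⟨A.1.orderEmbOfFin A.2, (A.1.orderEmbOfFin A.2).strictMono⟩
  left_inv t := Subtype.ext
    (orderEmbOfFin_unique _ (fun x => mem_image_of_mem _ (mem_univ x)) t.2).symm
  right_inv A := Subtype.ext <| coe_injective <| by
    rw [coe_image, coe_univ, Set.image_univ]
    exact range_orderEmbOfFin A.1 A.2

theorem card_monotone_fin (k m : ℕ) :
    Nat.card {s : Fin k → Fin m // Monotone s} = (m + k - 1).choose k := by
  rw [Nat.card_congr ((monotoneEquivStrictMono k m).trans (strictMonoEquivFinset k _)),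
    Nat.card_eq_fintype_card, Fintype.card_finset_len, Fintype.card_fin]

end MonotoneCount

lemma natCard_subtype_eq_sum {β : Type*} [Finite β] (P : β → Prop) (g : β → ℕ)
    {t : Finset ℕ} (hg : ∀ b, P b → g b ∈ t) :
    Nat.card {b // P b} = ∑ m ∈ t, Nat.card {b // P b ∧ g b = m} := by
  classical
  have := Fintype.ofFinite β
  simp only [Nat.card_eq_fintype_card, Fintype.card_subtype]
  rw [Finset.card_eq_sum_card_fiberwise (f := g) fun b hb => hg b (by simpa using hb)]
  simp only [Finset.filter_filter]

theorem statement3_general (n h k : ℕ) (hh : 1 ≤ h) (hk1 : 1 ≤ k) :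
    f n h k = ∑ m ∈ Finset.Icc 1 (n - k), (m + k - 1).choose (m - 1) * f (n - k) (h - 1) m := by
  rw [f_eq_card, natCard_subtype_eq_sum _ (fun c => (c.drop k).levelCard h)
    fun c hc => Finset.mem_Icc.2 ⟨(hc.drop hh).pos, (hc.drop hh).le⟩]
  refine Finset.sum_congr rfl fun m hm => ?_
  rw [Nat.card_congr (CanonSemiorder.shapeFiberEquiv hh hk1 m), Nat.card_prod,
    card_monotone_fin, f_eq_card,
    Nat.choose_symm_of_eq_add (a := k) (b := m - 1) (by have := (Finset.mem_Icc.1 hm).1; omega)]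

theorem statement3 (n h k : ℕ) (hh : 1 ≤ h) (hk1 : 1 ≤ k) (hkn : k ≤ n) :
    f n h k = ∑ m ∈ Finset.Icc 1 (n - k), (m + k - 1).choose (m - 1) * f (n - k) (h - 1) m :=
  statement3_general n h k hh hk1

end Paper
end

section
/- Every finite nonempty semiorder contains a bad element, i.e., an element x such that (i) x is on the first level or x is smaller than every element on the level immediately above its level, and (ii) x is on the last level or x is not larger than any element on the level immediately below its level. -/
/-!
In a semiorder the trace relation `a ≼ b` (everything above `b` is above `a`, everything below
`a` is below `b`) is total: a pair violating both directions produces a `2+2` or a `3+1`. Hence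
every nonempty level has a `≼`-least element. If some element of level `i` lies below all of
level `i - 1`, so does the `≼`-least element `m` of level `i`; if `m` is not bad, some element of
level `i + 1` lies below `m`, hence below all of level `i`. Starting from a maximal element,
a semiorder without bad elements would therefore have nonempty levels of every index, which is
impossible in a finite poset.
-/

namespace Paper

/-- A bad element of a semiorder. -/
def IsBad {α : Type*} [PartialOrder α] (x : α) : Prop :=
  ∀ i, OnLevel x i →
    ((i = 1 ∨ ∀ b, OnLevel b (i - 1) → x < b) ∧
     ((∃ H, HasLength α H ∧ i = H + 1) ∨ ∀ b, OnLevel b (i + 1) → ¬ b < x))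


section

variable {α : Type*} [PartialOrder α]

lemma HasChainAbove.mono {a : α} {k k' : ℕ} (h : k' ≤ k) (hc : HasChainAbove a k) :
    HasChainAbove a k' := by
  obtain ⟨c, hmono, habove⟩ := hc
  exact ⟨c ∘ Fin.castLE h, hmono.comp (Fin.strictMono_castLE h), fun j => habove _⟩

lemma HasChainAbove.hasChain_succ {a : α} {k : ℕ} (hc : HasChainAbove a k) :
    HasChain α (k + 1) := by
  obtain ⟨c, hmono, habove⟩ := hc
  exact ⟨Fin.cons a c, Fin.strictMono_cons.2 ⟨habove, hmono⟩⟩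

lemma OnLevel.unique {a : α} {i j : ℕ} (hi : OnLevel a i) (hj : OnLevel a j) : i = j := by
  by_contra hne
  rcases Nat.lt_or_gt_of_ne hne with h | h
  · exact hi.2.2 (hj.2.1.mono (by omega))
  · exact hj.2.2 (hi.2.1.mono (by omega))

lemma OnLevel.le_card [Fintype α] {a : α} {i : ℕ} (h : OnLevel a i) : i ≤ Fintype.card α := by
  obtain ⟨c, hc⟩ := h.2.1.hasChain_succ
  simpa [show i - 1 + 1 = i by have := h.1; omega] using
    Fintype.card_le_of_injective c hc.injective

lemma exists_onLevel_one [Finite α] [Nonempty α] : ∃ a : α, OnLevel a 1 := by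
  obtain ⟨a₀⟩ := ‹Nonempty α›
  obtain ⟨a, -, ha⟩ := Finite.exists_le_maximal (p := fun _ : α => True) (a := a₀) trivial
  refine ⟨a, le_rfl, ⟨Fin.elim0, fun i => i.elim0, fun j => j.elim0⟩, ?_⟩
  rintro ⟨c, -, hc⟩
  exact (hc 0).not_ge (ha.2 trivial (hc 0).le)

def TraceLE (a b : α) : Prop := (∀ c, b < c → a < c) ∧ (∀ c, c < a → c < b)

lemma traceLE_refl (a : α) : TraceLE a a := ⟨fun _ h => h, fun _ h => h⟩

lemma TraceLE.trans {a b c : α} (hab : TraceLE a b) (hbc : TraceLE b c) : TraceLE a c :=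
  ⟨fun d hd => hab.1 d (hbc.1 d hd), fun d hd => hbc.2 d (hab.2 d hd)⟩

lemma traceLE_total (hsemi : IsSemiorder α) (a b : α) : TraceLE a b ∨ TraceLE b a := by
  obtain ⟨no22, no31⟩ := hsemi
  by_contra! h
  simp only [TraceLE, not_and_or, not_forall, exists_prop] at h
  obtain ⟨⟨c, hbc, hac⟩ | ⟨c, hca, hcb⟩, ⟨d, had, hbd⟩ | ⟨d, hdb, hda⟩⟩ := h
  · refine no22 ⟨d, a, c, b, had, hbc, ?_, ?_, ?_, ?_⟩ <;> constructor <;> order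
  · refine no31 ⟨c, b, d, a, hdb, hbc, ?_, ?_, ?_⟩ <;> constructor <;> order
  · refine no31 ⟨d, a, c, b, hca, had, ?_, ?_, ?_⟩ <;> constructor <;> order
  · refine no22 ⟨a, c, b, d, hca, hdb, ?_, ?_, ?_, ?_⟩ <;> constructor <;> order

lemma exists_forall_traceLE (hsemi : IsSemiorder α) {s : Finset α} (hs : s.Nonempty) :
    ∃ m ∈ s, ∀ y ∈ s, TraceLE m y := by
  induction hs using Finset.Nonempty.cons_induction with
  | singleton a => exact ⟨a, by simp, by simpa using traceLE_refl a⟩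
  | cons a s _ _ ih =>
    obtain ⟨m, hm, hmin⟩ := ih
    rcases traceLE_total hsemi m a with hma | ham
    · exact ⟨m, by simp [hm], by simpa [hma] using hmin⟩
    · exact ⟨a, by simp, by simpa [traceLE_refl] using fun y hy => ham.trans (hmin y hy)⟩

def IsBelowLevelAbove (x : α) (i : ℕ) : Prop := i = 1 ∨ ∀ b, OnLevel b (i - 1) → x < b

lemma isBad_of_onLevel {x : α} {i : ℕ} (hx : OnLevel x i) (hbelow : IsBelowLevelAbove x i)
    (hnot_above : ∀ b, OnLevel b (i + 1) → ¬ b < x) : IsBad x := by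
  intro j hj
  obtain rfl := hx.unique hj
  exact ⟨hbelow, Or.inr hnot_above⟩

lemma exists_onLevel_succ_isBelowLevelAbove [Fintype α] (hsemi : IsSemiorder α)
    (hbad : ∀ x : α, ¬ IsBad x) {x : α} {i : ℕ} (hx : OnLevel x i)
    (hbelow : IsBelowLevelAbove x i) :
    ∃ y : α, OnLevel y (i + 1) ∧ IsBelowLevelAbove y (i + 1) := by
  classical
  obtain ⟨m, hm, hmin⟩ := exists_forall_traceLE hsemi (s := {y | OnLevel y i})
    ⟨x, by simpa using hx⟩
  simp only [Finset.mem_filter, Finset.mem_univ, true_and] at hm hmin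
  have hm_below : IsBelowLevelAbove m i := hbelow.imp id fun h b hb => (hmin x hx).1 b (h b hb)
  obtain ⟨y, hy, hym⟩ : ∃ y, OnLevel y (i + 1) ∧ y < m := by
    by_contra! h
    exact hbad m (isBad_of_onLevel hm hm_below h)
  exact ⟨y, hy, Or.inr fun b hb => (hmin b hb).2 y hym⟩

end

theorem statement8 {α : Type*} [Fintype α] [PartialOrder α] [Nonempty α]
    (hsemi : IsSemiorder α) : ∃ x : α, IsBad x := by
  by_contra! hbad
  have hlevels : ∀ n, ∃ x : α, OnLevel x (n + 1) ∧ IsBelowLevelAbove x (n + 1) := by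
    intro n
    induction n with
    | zero =>
      obtain ⟨x, hx⟩ := exists_onLevel_one (α := α)
      exact ⟨x, hx, Or.inl rfl⟩
    | succ n ih =>
      obtain ⟨x, hx, hbelow⟩ := ih
      exact exists_onLevel_succ_isBelowLevelAbove hsemi hbad hx hbelow
  obtain ⟨x, hx, -⟩ := hlevels (Fintype.card α)
  exact absurd hx.le_card (by omega)

end Paper
end

section
/- The number of distinct sets RtLM(σ) over all permutations σ of {1,...,m} equals the Catalan number C_m = (1/(m+1))·C(2m,m). -/
namespace Paper

/-- `σ a` is a right-to-left minimum of `σ`. -/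
def IsRtLMin {m : ℕ} (σ : Equiv.Perm (Fin m)) (a : Fin m) : Prop :=
  ∀ b, a < b → σ a < σ b

/-- The set of (position, value) pairs of right-to-left minima of `σ`. -/
def RtLM {m : ℕ} (σ : Equiv.Perm (Fin m)) : Set (Fin m × Fin m) :=
  {p | p.2 = σ p.1 ∧ IsRtLMin σ p.1}

/-- The number of right-to-left minima of `σ`. -/
noncomputable def numRtLMin {m : ℕ} (σ : Equiv.Perm (Fin m)) : ℕ :=
  Nat.card {a : Fin m // IsRtLMin σ a}


/-!
Put `π = σ⁻¹`. A pair `(a, v)` is a right-to-left minimum of `σ` exactly when `a = π v` is a new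
maximum of the sequence `π 0, π 1, …`, so `RtLM σ` and the prefix maxima `v ↦ max_{w ≤ v} π w`
determine each other. The prefix-maximum functions of permutations of `Fin m` are exactly the
monotone maps `g` with `q ≤ g q`: given such a `g`, put the value `g q` at the first position
where it occurs and fill the remaining positions increasingly with the values `g` misses. Cutting
such a `g` at its first fixed point `t` leaves two maps of the same kind, on `[0, t)` and on
`(t, m]`, which is the Catalan recursion.
-/

open Finset

section PrefixMax

variable {ι α : Type*} [Preorder ι] [LocallyFiniteOrderBot ι] [LinearOrder α]

def prefixMax (f : ι → α) (i : ι) : α := (Iic i).sup' nonempty_Iic f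

lemma le_prefixMax (f : ι → α) {i j : ι} (h : j ≤ i) : f j ≤ prefixMax f i :=
  le_sup' f (mem_Iic.2 h)

lemma prefixMax_le_iff {f : ι → α} {i : ι} {a : α} : prefixMax f i ≤ a ↔ ∀ j ≤ i, f j ≤ a := by
  simp [prefixMax]

lemma exists_le_apply_eq_prefixMax (f : ι → α) (i : ι) : ∃ j ≤ i, f j = prefixMax f i := by
  obtain ⟨j, hj, h⟩ := exists_mem_eq_sup' (nonempty_Iic (a := i)) f
  exact ⟨j, mem_Iic.1 hj, h.symm⟩

lemma monotone_prefixMax (f : ι → α) : Monotone (prefixMax f) := fun _ _ h ↦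
  sup'_mono f (Iic_subset_Iic.2 h) nonempty_Iic

end PrefixMax

lemma le_prefixMax_self {m : ℕ} {f : Fin m → Fin m} (hf : Function.Injective f) (i : Fin m) :
    i ≤ prefixMax f i := by
  have hsub : (Iic i).image f ⊆ Iic (prefixMax f i) := fun _ h ↦ by
    obtain ⟨j, hj, rfl⟩ := mem_image.1 h
    exact mem_Iic.2 (le_prefixMax f (mem_Iic.1 hj))
  have := card_le_card hsub
  rw [card_image_of_injective _ hf, Fin.card_Iic, Fin.card_Iic] at this
  exact Fin.le_def.2 (by omega)

lemma card_range_eq_of_apply_eq_iff {α β γ : Type*} {f : α → β} {g : α → γ}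
    (h : ∀ a b, f a = f b ↔ g a = g b) : Nat.card (Set.range f) = Nat.card (Set.range g) :=
  Nat.card_congr <| (Setoid.quotientKerEquivRange f).symm.trans <|
    (Quotient.congrRight h).trans (Setoid.quotientKerEquivRange g)

section RtLM

variable {m : ℕ} (σ : Equiv.Perm (Fin m))

lemma apply_prefixMax_symm_le (v : Fin m) : σ (prefixMax σ.symm v) ≤ v := by
  obtain ⟨w, hw, hmax⟩ := exists_le_apply_eq_prefixMax σ.symm v
  simpa [← hmax] using hw

lemma isRtLMin_prefixMax_symm (v : Fin m) : IsRtLMin σ (prefixMax σ.symm v) := by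
  intro b hb
  by_contra! hσb
  exact hb.not_ge (by simpa using le_prefixMax σ.symm (hσb.trans (apply_prefixMax_symm_le σ v)))

lemma mem_RtLM {a v : Fin m} : (a, v) ∈ RtLM σ ↔ v = σ a ∧ IsRtLMin σ a := Iff.rfl

lemma mem_RtLM_iff {a v : Fin m} :
    (a, v) ∈ RtLM σ ↔ prefixMax σ.symm v = a ∧ ∀ w < v, prefixMax σ.symm w ≠ a := by
  rw [mem_RtLM]
  constructor
  · rintro ⟨rfl, hmin⟩
    refine ⟨le_antisymm (prefixMax_le_iff.2 fun w hw ↦ ?_)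
      (by simpa using le_prefixMax σ.symm (le_refl (σ a))), fun v hv heq ↦ ?_⟩
    · by_contra! h
      exact (hmin _ h).not_ge (by simpa using hw)
    · exact (apply_prefixMax_symm_le σ v).not_gt (heq ▸ hv)
  · rintro ⟨rfl, hfirst⟩
    refine ⟨((apply_prefixMax_symm_le σ v).eq_of_not_lt fun hlt ↦ hfirst _ hlt ?_).symm,
      isRtLMin_prefixMax_symm σ v⟩
    exact le_antisymm (monotone_prefixMax _ (apply_prefixMax_symm_le σ v))
      (by simpa using le_prefixMax σ.symm (le_refl (σ (prefixMax σ.symm v))))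

lemma RtLM_eq_RtLM_iff {σ τ : Equiv.Perm (Fin m)} :
    RtLM σ = RtLM τ ↔ prefixMax σ.symm = prefixMax τ.symm := by
  refine ⟨fun h ↦ ?_, fun h ↦ Set.ext fun ⟨a, v⟩ ↦ by rw [mem_RtLM_iff, mem_RtLM_iff, h]⟩
  have key : ∀ σ τ : Equiv.Perm (Fin m), RtLM σ ⊆ RtLM τ → prefixMax σ.symm ≤ prefixMax τ.symm :=
    fun σ τ h v ↦ by
      have hmem := h ((mem_RtLM σ).2 ⟨rfl, isRtLMin_prefixMax_symm σ v⟩)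
      rw [mem_RtLM_iff] at hmem
      exact hmem.1 ▸ monotone_prefixMax _ (apply_prefixMax_symm_le σ v)
  exact le_antisymm (key σ τ h.le) (key τ σ h.ge)

end RtLM

section Records

variable {ι α : Type*} [LinearOrder ι] [Fintype ι] [LinearOrder α] {g : ι → α}

def records (g : ι → α) : Finset ι := univ.filter fun q ↦ ∀ p < q, g p < g q

lemma injOn_records : Set.InjOn g (records g) := by
  intro p hp q hq h
  simp only [records, mem_coe, mem_filter, mem_univ, true_and] at hp hq
  by_contra hne
  rcases lt_or_gt_of_ne hne with hlt | hlt
  · exact (hq p hlt).ne h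
  · exact (hp q hlt).ne h.symm

lemma exists_mem_records_le_apply_eq (hg : Monotone g) (q : ι) :
    ∃ r ∈ records g, r ≤ q ∧ g r = g q := by
  obtain ⟨r, hr, hmin⟩ := (univ.filter fun p ↦ g p = g q).exists_min_image id ⟨q, by simp⟩
  rw [mem_filter] at hr
  refine ⟨r, mem_filter.2 ⟨mem_univ r, fun p hp ↦ (hg hp.le).lt_of_ne fun h ↦ ?_⟩,
    hmin q (by simp), hr.2⟩
  exact (hmin p (by simp [h, hr.2])).not_gt hp

lemma image_filter_records_le (hg : Monotone g) (q : ι) :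
    ((records g).filter (· ≤ q)).image g = (univ.image g).filter (· ≤ g q) := by
  ext y
  simp only [mem_image, mem_filter, mem_univ, true_and]
  constructor
  · rintro ⟨r, ⟨-, hrq⟩, rfl⟩
    exact ⟨⟨r, rfl⟩, hg hrq⟩
  · rintro ⟨⟨p, rfl⟩, hpq⟩
    obtain ⟨r, hr, -, hrp⟩ := exists_mem_records_le_apply_eq hg p
    refine ⟨r, ⟨hr, le_of_not_gt fun hqr ↦ ?_⟩, hrp⟩
    exact ((mem_filter.1 hr).2 q hqr).not_ge (hrp ▸ hpq)

lemma image_records (hg : Monotone g) : (records g).image g = univ.image g := by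
  refine (image_subset_image (subset_univ _)).antisymm fun y hy ↦ ?_
  obtain ⟨p, -, rfl⟩ := mem_image.1 hy
  obtain ⟨r, hr, -, hrp⟩ := exists_mem_records_le_apply_eq hg p
  exact mem_image.2 ⟨r, hr, hrp⟩

end Records

lemma card_filter_le_orderIso {α : Type*} [LinearOrder α] {s t : Finset α} (e : s ≃o t) (x : s) :
    #(t.filter (· ≤ (e x : α))) = #(s.filter (· ≤ (x : α))) := by
  symm
  refine card_bij (fun y hy ↦ e ⟨y, (mem_filter.1 hy).1⟩) (fun y hy ↦ ?_) (fun y hy z hz h ↦ ?_)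
    (fun z hz ↦ ?_)
  · exact mem_filter.2 ⟨(e _).2, e.monotone (Subtype.coe_le_coe.1 (mem_filter.1 hy).2)⟩
  · simpa using e.injective (Subtype.ext h)
  · obtain ⟨hz, hzx⟩ := mem_filter.1 hz
    refine ⟨e.symm ⟨z, hz⟩, mem_filter.2 ⟨(e.symm _).2, ?_⟩, by simp⟩
    exact Subtype.coe_le_coe.2 (e.symm_apply_le.2 hzx)

lemma coe_orderIso_le_of_card_filter_le {α : Type*} [LinearOrder α] {s t : Finset α}
    (e : s ≃o t) (x : s) {y : α} (h : #(s.filter (· ≤ (x : α))) ≤ #(t.filter (· ≤ y))) :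
    (e x : α) ≤ y := by
  by_contra! hy
  have hss : t.filter (· ≤ y) ⊂ t.filter (· ≤ (e x : α)) :=
    ssubset_iff_of_subset (fun z hz ↦ by
      simp only [mem_filter] at hz ⊢; exact ⟨hz.1, hz.2.trans hy.le⟩) |>.2
      ⟨e x, mem_filter.2 ⟨(e x).2, le_rfl⟩, fun hex ↦ (mem_filter.1 hex).2.not_gt hy⟩
  have := card_lt_card hss
  rw [card_filter_le_orderIso] at this
  omega

lemma card_filter_compl_add_card_filter {m : ℕ} (s : Finset (Fin m)) (x : Fin m) :
    #(sᶜ.filter (· ≤ x)) + #(s.filter (· ≤ x)) = x + 1 := by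
  rw [← Fin.card_Iic, ← card_filter_add_card_filter_not (s := Iic x) (p := (· ∉ s))]
  congr 2 <;> ext <;> simp [and_comm]

def monotoneAboveDiag (m : ℕ) : Set (Fin m → Fin m) := {g | Monotone g ∧ ∀ q, q ≤ g q}

section Construction

variable {m : ℕ} {g : Fin m → Fin m}

lemma card_filter_compl_records_le (hg : Monotone g) (hid : ∀ q, q ≤ g q) (q : Fin m) :
    #((records g)ᶜ.filter (· ≤ q)) ≤ #((univ.image g)ᶜ.filter (· ≤ g q)) := by
  have hR := card_filter_compl_add_card_filter (records g) q
  have hV := card_filter_compl_add_card_filter (univ.image g) (g q)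
  rw [← image_filter_records_le hg,
    card_image_of_injOn (injOn_records.mono (coe_subset.2 (filter_subset _ _)))] at hV
  have := Fin.le_def.1 (hid q)
  omega

lemma exists_perm_prefixMax_eq (hg : Monotone g) (hid : ∀ q, q ≤ g q) :
    ∃ π : Equiv.Perm (Fin m), prefixMax π = g := by
  set R := records g
  have hcard : #Rᶜ = #(univ.image g)ᶜ := by
    rw [card_compl, card_compl, ← image_records hg, card_image_of_injOn injOn_records]
  let e : (Rᶜ : Finset _) ≃o ((univ.image g)ᶜ : Finset _) :=
    (Rᶜ.orderIsoOfFin rfl).symm.trans ((univ.image g)ᶜ.orderIsoOfFin hcard.symm)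
  let π : Fin m → Fin m := fun q ↦ if h : q ∈ R then g q else e ⟨q, mem_compl.2 h⟩
  have hπR : ∀ q ∈ R, π q = g q := fun q hq ↦ dif_pos hq
  have hπN : ∀ q (hq : q ∉ R), π q = e ⟨q, mem_compl.2 hq⟩ := fun q hq ↦ dif_neg hq
  have hle : ∀ q, π q ≤ g q := fun q ↦ by
    by_cases hq : q ∈ R
    · exact (hπR q hq).le
    · exact hπN q hq ▸ coe_orderIso_le_of_card_filter_le e _ (card_filter_compl_records_le hg hid q)
  have hinj : Function.Injective π := by
    have hπN_mem : ∀ q (hq : q ∉ R), π q ∉ univ.image g := fun q hq ↦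
      mem_compl.1 (hπN q hq ▸ (e _).2)
    intro p q h
    by_cases hp : p ∈ R <;> by_cases hq : q ∈ R
    · exact injOn_records hp hq (by rw [← hπR p hp, ← hπR q hq, h])
    · exact absurd (h ▸ hπR p hp ▸ mem_image_of_mem g (mem_univ p)) (hπN_mem q hq)
    · exact absurd (h ▸ hπR q hq ▸ mem_image_of_mem g (mem_univ q)) (hπN_mem p hp)
    · rw [hπN p hp, hπN q hq] at h
      simpa using e.injective (Subtype.ext h)
  refine ⟨Equiv.ofBijective π (Finite.injective_iff_bijective.1 hinj), funext fun q ↦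
    le_antisymm (prefixMax_le_iff.2 fun p hp ↦ (hle p).trans (hg hp)) ?_⟩
  obtain ⟨r, hr, hrq, hgr⟩ := exists_mem_records_le_apply_eq hg q
  exact hgr ▸ hπR r hr ▸ le_prefixMax π hrq

end Construction

lemma range_prefixMax (m : ℕ) :
    Set.range (fun π : Equiv.Perm (Fin m) ↦ prefixMax π) = monotoneAboveDiag m := by
  ext g
  constructor
  · rintro ⟨π, rfl⟩
    exact ⟨monotone_prefixMax π, le_prefixMax_self π.injective⟩
  · rintro ⟨hg, hid⟩
    exact exists_perm_prefixMax_eq hg hid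

section Decomposition

variable {m : ℕ}

def glue (t : Fin (m + 1)) (g₁ : Fin t → Fin t) (g₂ : Fin (m - t) → Fin (m - t))
    (q : Fin (m + 1)) : Fin (m + 1) :=
  if h : (q : ℕ) < t then ⟨g₁ ⟨q, h⟩ + 1, by have := (g₁ ⟨q, h⟩).2; omega⟩
  else if h' : (q : ℕ) = t then t
  else ⟨g₂ ⟨q - (t + 1), by omega⟩ + (t + 1), by have := (g₂ ⟨q - (t + 1), by omega⟩).2; omega⟩

variable {t : Fin (m + 1)} {g₁ : Fin t → Fin t} {g₂ : Fin (m - t) → Fin (m - t)} {q : Fin (m + 1)}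

lemma glue_of_lt (h : (q : ℕ) < t) : (glue t g₁ g₂ q : ℕ) = g₁ ⟨q, h⟩ + 1 := by
  simp [glue, h]

lemma glue_self : glue t g₁ g₂ t = t := by
  simp [glue]

lemma glue_of_gt (h : (t : ℕ) < q) :
    (glue t g₁ g₂ q : ℕ) = g₂ ⟨q - (t + 1), by omega⟩ + (t + 1) := by
  simp [glue, h.not_gt, h.ne']

lemma glue_ne_self (hg₁ : ∀ i, i ≤ g₁ i) (h : (q : ℕ) < t) : glue t g₁ g₂ q ≠ q := fun heq ↦ by
  have : (q : ℕ) ≤ g₁ ⟨q, h⟩ := hg₁ ⟨q, h⟩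
  have := congrArg Fin.val heq
  rw [glue_of_lt h] at this
  omega

lemma glue_le (h : (q : ℕ) ≤ t) : (glue t g₁ g₂ q : ℕ) ≤ t := by
  rcases h.lt_or_eq with h | h
  · have := (g₁ ⟨q, h⟩).2
    rw [glue_of_lt h]
    omega
  · rw [Fin.ext h, glue_self]

lemma lt_glue (h : (t : ℕ) < q) : (t : ℕ) < glue t g₁ g₂ q := by
  rw [glue_of_gt h]
  omega

lemma glue_mem (hg₁ : g₁ ∈ monotoneAboveDiag t) (hg₂ : g₂ ∈ monotoneAboveDiag (m - t)) :
    glue t g₁ g₂ ∈ monotoneAboveDiag (m + 1) := by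
  obtain ⟨mono₁, diag₁⟩ := hg₁
  obtain ⟨mono₂, diag₂⟩ := hg₂
  refine ⟨fun p q hpq ↦ Fin.le_def.2 ?_, fun q ↦ Fin.le_def.2 ?_⟩
  · rw [Fin.le_def] at hpq
    rcases lt_trichotomy (q : ℕ) t with hq | hq | hq
    · have hp : (p : ℕ) < t := by omega
      have : (g₁ ⟨p, hp⟩ : ℕ) ≤ g₁ ⟨q, hq⟩ := mono₁ (Fin.mk_le_mk.2 hpq)
      rw [glue_of_lt hp, glue_of_lt hq]
      omega
    · rw [Fin.ext hq, glue_self]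
      exact glue_le (by omega)
    · rcases le_or_gt (p : ℕ) t with hp | hp
      · exact (glue_le hp).trans (lt_glue hq).le
      · have : (g₂ ⟨p - (t + 1), by omega⟩ : ℕ) ≤ g₂ ⟨q - (t + 1), by omega⟩ :=
          mono₂ (Fin.mk_le_mk.2 (by omega))
        rw [glue_of_gt hp, glue_of_gt hq]
        omega
  · rcases lt_trichotomy (q : ℕ) t with hq | hq | hq
    · have : (q : ℕ) ≤ g₁ ⟨q, hq⟩ := diag₁ ⟨q, hq⟩
      rw [glue_of_lt hq]
      omega
    · rw [Fin.ext hq, glue_self]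
    · have : q - (t + 1) ≤ (g₂ ⟨q - (t + 1), by omega⟩ : ℕ) := diag₂ ⟨q - (t + 1), by omega⟩
      rw [glue_of_gt hq]
      omega

lemma exists_mem_monotoneAboveDiag_restrict {n k : ℕ} {g : Fin n → Fin n}
    (hg : g ∈ monotoneAboveDiag n) (a s : ℕ) (hk : a + k ≤ n)
    (hbound : ∀ q : Fin n, a ≤ q → q < a + k → q + s ≤ g q ∧ g q < a + s + k) :
    ∃ g' ∈ monotoneAboveDiag k, ∀ (q : Fin n) (h₁ : a ≤ q) (h₂ : q < a + k),
      (g' ⟨q - a, by omega⟩ : ℕ) + (a + s) = g q := by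
  have hb := fun i : Fin k ↦ hbound ⟨a + i, by omega⟩ (by simp) (by simp)
  refine ⟨fun i ↦ ⟨g ⟨a + i, by omega⟩ - (a + s), by have := hb i; simp only at this; omega⟩,
    ⟨fun i j hij ↦ ?_, fun i ↦ ?_⟩, fun q h₁ h₂ ↦ ?_⟩
  · exact Fin.mk_le_mk.2 (Nat.sub_le_sub_right (hg.1 (Fin.mk_le_mk.2 (by omega))) _)
  · have := hb i
    simp only at this
    exact Fin.mk_le_mk.2 (by omega)
  · have := (hb ⟨q - a, by omega⟩).1
    simp only [add_tsub_cancel_of_le h₁, Fin.eta] at this ⊢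
    omega

def glueMap (m : ℕ) (x : Σ t : Fin (m + 1), monotoneAboveDiag t × monotoneAboveDiag (m - t)) :
    monotoneAboveDiag (m + 1) :=
  ⟨glue x.1 x.2.1 x.2.2, glue_mem x.2.1.2 x.2.2.2⟩

lemma glueMap_injective (m : ℕ) : Function.Injective (glueMap m) := by
  rintro ⟨t, ⟨g₁, hg₁⟩, ⟨g₂, hg₂⟩⟩ ⟨s, ⟨h₁, hh₁⟩, ⟨h₂, hh₂⟩⟩ h
  replace h : glue t g₁ g₂ = glue s h₁ h₂ := congrArg Subtype.val h
  obtain rfl : t = s :=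
    le_antisymm (not_lt.1 fun hst ↦ glue_ne_self hg₁.2 hst ((congrFun h s).trans glue_self))
      (not_lt.1 fun hts ↦ glue_ne_self hh₁.2 hts ((congrFun h t).symm.trans glue_self))
  obtain rfl : g₁ = h₁ := funext fun i ↦ Fin.ext <| by
    have := congrArg (fun G ↦ (G ⟨i, by omega⟩ : ℕ)) h
    simpa only [glue_of_lt (q := ⟨i, _⟩) i.isLt, add_left_inj] using this
  obtain rfl : g₂ = h₂ := funext fun i ↦ Fin.ext <| by
    have := congrArg (fun G ↦ (G ⟨t + 1 + i, by omega⟩ : ℕ)) h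
    simpa only [glue_of_gt (q := ⟨t + 1 + i, _⟩) (show (t : ℕ) < t + 1 + i by omega),
      add_left_inj, add_tsub_cancel_left] using this
  rfl

lemma glueMap_surjective (m : ℕ) : Function.Surjective (glueMap m) := by
  rintro ⟨g, hg⟩
  obtain ⟨t, ht, hmin⟩ := (univ.filter fun q ↦ g q = q).exists_min_image id
    ⟨Fin.last m, by simpa using (hg.2 _).antisymm' (Fin.le_last _)⟩
  replace ht : g t = t := (mem_filter.1 ht).2
  replace hmin : ∀ q < t, g q ≠ q := fun q hq hfix ↦ (hmin q (by simpa using hfix)).not_gt hq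
  obtain ⟨g₁, hg₁, spec₁⟩ := exists_mem_monotoneAboveDiag_restrict hg 0 1 (k := t) (by omega)
    fun q _ hq ↦ by
      have hle : (q : ℕ) ≤ g q := hg.2 q
      have hne : (g q : ℕ) ≠ q := fun h ↦ hmin q (show (q : ℕ) < t by omega) (Fin.ext h)
      have hgt : (g q : ℕ) ≤ t := ht ▸ hg.1 (show (q : ℕ) ≤ t by omega)
      omega
  obtain ⟨g₂, hg₂, spec₂⟩ := exists_mem_monotoneAboveDiag_restrict hg (t + 1) 0 (k := m - t)
    (by omega) fun q _ _ ↦ ⟨by simpa using hg.2 q, by omega⟩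
  refine ⟨⟨t, ⟨g₁, hg₁⟩, ⟨g₂, hg₂⟩⟩, Subtype.ext (funext fun q ↦ Fin.ext ?_)⟩
  rcases lt_trichotomy (q : ℕ) t with hq | hq | hq
  · simpa [glueMap, glue_of_lt hq] using spec₁ q (Nat.zero_le _) (by omega)
  · simp [glueMap, Fin.ext hq, glue_self, ht]
  · simpa [glueMap, glue_of_gt hq] using spec₂ q hq (by omega)

end Decomposition

theorem card_monotoneAboveDiag (n : ℕ) : Nat.card (monotoneAboveDiag n) = catalan n := by
  induction n using Nat.strong_induction_on with
  | _ n ih =>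
    cases n with
    | zero =>
      rw [catalan_zero, Nat.card_eq_one_iff_exists]
      exact ⟨⟨id, monotone_id, fun _ ↦ le_rfl⟩, fun g ↦ Subtype.ext (funext (·.elim0))⟩
    | succ m =>
      rw [← Nat.card_congr (Equiv.ofBijective _ ⟨glueMap_injective m, glueMap_surjective m⟩),
        Nat.card_sigma, catalan_succ]
      refine Fintype.sum_congr _ _ fun t ↦ ?_
      rw [Nat.card_prod, ih t (by omega), ih (m - t) (by omega)]

theorem statement16 (m : ℕ) :
    Nat.card {S : Set (Fin m × Fin m) // ∃ σ : Equiv.Perm (Fin m), RtLM σ = S}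
      = (2 * m).choose m / (m + 1) := by
  calc Nat.card (Set.range (RtLM (m := m)))
      = Nat.card (Set.range fun σ : Equiv.Perm (Fin m) ↦ prefixMax σ.symm) :=
        card_range_eq_of_apply_eq_iff fun _ _ ↦ RtLM_eq_RtLM_iff
    _ = Nat.card (monotoneAboveDiag m) := by
        rw [← range_prefixMax]
        exact congrArg (fun s : Set _ ↦ Nat.card s)
          ((Equiv.symm_bijective (α := Fin m) (β := Fin m)).surjective.range_comp
            fun π : Equiv.Perm (Fin m) ↦ prefixMax π)
    _ = (2 * m).choose m / (m + 1) := by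
        rw [card_monotoneAboveDiag, catalan_eq_centralBinom_div, Nat.centralBinom]

end Paper
end

section
/- The number of nonisomorphic labeled n-element semiorders of length at most one equals the number of ordered set partitions of {1,...,n} (the Fubini/ordered Bell number). -/
namespace Paper

/-!
Encode an ordered set partition `(B₀, …, B_{m-1})` by its block-index function `f`, whose image
is an initial segment of `ℕ`. Declare `a < b` when `a` lies in an even block, `b` in an odd block,
and `a`'s block comes first. This is a poset with no `3`-chain and no `2+2`, and `f` can be read
back from the order. Conversely, in a semiorder of height one the strict down-sets form a chain
`D₀ ⊂ D₁ ⊂ ⋯`; an element with something below it goes to block `2k+1` when its down-set is `D_k`,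
and any other element goes to block `2k`, where `k` counts the `D_i` not containing it.
-/

open Finset

section Packed

variable {α : Type*}

/-- `f` takes every value below each of its values; for finite `α` these are exactly the
block-index functions of ordered set partitions. -/
def IsPacked (f : α → ℕ) : Prop := ∀ x, ∀ i < f x, ∃ y, f y = i

theorem IsPacked.eq_of_le_iff {f g : α → ℕ} (hf : IsPacked f) (hg : IsPacked g)
    (h : ∀ a b, f a ≤ f b ↔ g a ≤ g b) : f = g := by
  suffices key : ∀ v x, f x = v → g x = v from funext fun x => (key _ x rfl).symm
  intro v
  induction v using Nat.strong_induction_on with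
  | _ v ih =>
  intro x hx
  apply le_antisymm
  · by_contra! hlt
    obtain ⟨z, hz⟩ := hg x v hlt
    have hzx : f z < f x := lt_of_not_ge fun hle => by have := (h x z).1 hle; omega
    have := ih (f z) (hx ▸ hzx) z rfl
    omega
  · by_contra! hlt
    obtain ⟨y, hy⟩ := hf x (g x) (hx ▸ hlt)
    have := ih (f y) (hy ▸ hlt) y rfl
    have := (h x y).2 (by omega)
    omega

end Packed

section OrderedPartition

variable {α : Type*}

theorem mem_foldr_union [DecidableEq α] {L : List (Finset α)} {x : α} :
    x ∈ L.foldr (· ∪ ·) ∅ ↔ ∃ s ∈ L, x ∈ s := by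
  induction L with
  | nil => simp
  | cons s L ih => simp [ih]

def blockIndex [DecidableEq α] (L : List (Finset α)) (x : α) : ℕ := L.findIdx (x ∈ ·)

variable [Fintype α]

def blocksOf (f : α → ℕ) : List (Finset α) :=
  (List.range (univ.sup (f · + 1))).map fun i => univ.filter (f · = i)

theorem lt_length_blocksOf (f : α → ℕ) (x : α) : f x < (blocksOf f).length := by
  simpa [blocksOf] using Nat.lt_of_succ_le (le_sup (f := (f · + 1)) (mem_univ x))

variable [DecidableEq α]

def IsOrderedPartition (L : List (Finset α)) : Prop :=
  (∀ s ∈ L, s.Nonempty) ∧ L.Pairwise (fun s t => Disjoint s t) ∧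
    L.foldr (· ∪ ·) ∅ = Finset.univ

variable {L : List (Finset α)}

theorem IsOrderedPartition.blockIndex_lt_length (hL : IsOrderedPartition L) (x : α) :
    blockIndex L x < L.length := by
  obtain ⟨s, hs, hx⟩ := mem_foldr_union.1 (hL.2.2 ▸ mem_univ x)
  exact List.findIdx_lt_length.2 ⟨s, hs, by simpa using hx⟩

theorem IsOrderedPartition.mem_getElem_iff (hL : IsOrderedPartition L) {i : ℕ}
    (hi : i < L.length) {x : α} : x ∈ L[i] ↔ blockIndex L x = i := by
  rw [blockIndex, List.findIdx_eq hi]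
  refine ⟨fun hx => ⟨by simpa using hx, fun j hji => ?_⟩, fun h => by simpa using h.1⟩
  have hdisj := List.pairwise_iff_getElem.1 hL.2.1 j i (hji.trans hi) hi hji
  simpa using hdisj.notMem_of_mem_right_finset hx

theorem IsOrderedPartition.isPacked_blockIndex (hL : IsOrderedPartition L) :
    IsPacked (blockIndex L) := by
  intro x i hi
  have hiL : i < L.length := hi.trans (hL.blockIndex_lt_length x)
  obtain ⟨y, hy⟩ := hL.1 _ (List.getElem_mem hiL)
  exact ⟨y, (hL.mem_getElem_iff hiL).1 hy⟩

theorem IsOrderedPartition.length_le_of_blockIndex_eq {L' : List (Finset α)}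
    (hL : IsOrderedPartition L) (hL' : IsOrderedPartition L')
    (h : blockIndex L = blockIndex L') : L'.length ≤ L.length := by
  by_contra! hlt
  obtain ⟨y, hy⟩ := hL'.1 _ (List.getElem_mem hlt)
  have := hL.blockIndex_lt_length y
  rw [h, (hL'.mem_getElem_iff hlt).1 hy] at this
  exact lt_irrefl _ this

theorem IsOrderedPartition.eq_of_blockIndex_eq {L' : List (Finset α)}
    (hL : IsOrderedPartition L) (hL' : IsOrderedPartition L')
    (h : blockIndex L = blockIndex L') : L = L' := by
  refine List.ext_getElem (le_antisymm (hL'.length_le_of_blockIndex_eq hL h.symm)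
    (hL.length_le_of_blockIndex_eq hL' h)) fun i hi hi' => ?_
  ext x
  rw [hL.mem_getElem_iff hi, hL'.mem_getElem_iff hi', h]

theorem IsPacked.isOrderedPartition_blocksOf {f : α → ℕ} (hf : IsPacked f) :
    IsOrderedPartition (blocksOf f) := by
  refine ⟨?_, ?_, ?_⟩
  · simp only [blocksOf, List.mem_map, List.mem_range]
    rintro s ⟨i, hi, rfl⟩
    obtain ⟨x, -, hix⟩ := Finset.lt_sup_iff.1 hi
    obtain hix | hix := (Nat.lt_succ_iff.1 hix).lt_or_eq
    · obtain ⟨y, hy⟩ := hf x i hix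
      exact ⟨y, by simpa using hy⟩
    · exact ⟨x, by simpa using hix.symm⟩
  · exact List.pairwise_map.2 (List.pairwise_lt_range.imp fun hij =>
      disjoint_filter.2 fun x _ hi hj => hij.ne (hi.symm.trans hj))
  · refine eq_univ_of_forall fun x => mem_foldr_union.2 ⟨univ.filter (f · = f x), ?_, by simp⟩
    exact List.mem_map.2 ⟨f x, by simpa [blocksOf] using lt_length_blocksOf f x, rfl⟩

theorem IsPacked.blockIndex_blocksOf {f : α → ℕ} (hf : IsPacked f) :
    blockIndex (blocksOf f) = f := by
  funext x
  exact (hf.isOrderedPartition_blocksOf.mem_getElem_iff (lt_length_blocksOf f x)).1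
    (by simp [blocksOf])

theorem card_isOrderedPartition_eq_card_isPacked :
    Nat.card {L : List (Finset α) // IsOrderedPartition L} = Nat.card {f : α → ℕ // IsPacked f} :=
  Nat.card_eq_of_bijective (fun L => ⟨blockIndex L.1, L.2.isPacked_blockIndex⟩)
    ⟨fun L L' h => Subtype.ext (L.2.eq_of_blockIndex_eq L'.2 (congrArg Subtype.val h)),
      fun f => ⟨⟨blocksOf f.1, f.2.isOrderedPartition_blocksOf⟩,
        Subtype.ext f.2.blockIndex_blocksOf⟩⟩

end OrderedPartition

section LevelOrder

variable {α : Type*}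

def LevelLT (f : α → ℕ) (a b : α) : Prop := Even (f a) ∧ Odd (f b) ∧ f a < f b

theorem LevelLT.not_levelLT {f : α → ℕ} {a b c : α} (hab : LevelLT f a b) :
    ¬ LevelLT f b c :=
  fun hbc => Nat.not_even_iff_odd.2 hab.2.1 hbc.1

instance (f : α → ℕ) : IsStrictOrder α (LevelLT f) where
  irrefl _ h := lt_irrefl _ h.2.2
  trans _ _ _ hab hbc := (hab.not_levelLT hbc).elim

abbrev levelOrder (f : α → ℕ) : PartialOrder α := partialOrderOfSO (LevelLT f)

theorem isSemiorder_levelOrder (f : α → ℕ) : @IsSemiorder α (levelOrder f) := by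
  let := levelOrder f
  refine ⟨?_, fun ⟨_, _, _, _, hzy, hyx, _⟩ => hzy.not_levelLT hyx⟩
  rintro ⟨x, y, z, w, hyx, hwz, -, hxw, hyz, -⟩
  change LevelLT f y x at hyx
  change LevelLT f w z at hwz
  have hyz' : ¬ LevelLT f y z := fun h => hyz.1 (le_of_lt h)
  have hwx' : ¬ LevelLT f w x := fun h => hxw.2 (le_of_lt h)
  simp only [LevelLT, Nat.even_iff, Nat.odd_iff] at hyx hwz hyz' hwx'
  omega

theorem not_hasChain_three_levelOrder (f : α → ℕ) :
    ¬ @HasChain α (levelOrder f).toPreorder 3 := by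
  let := levelOrder f
  rintro ⟨c, hc⟩
  exact (hc (show (0 : Fin 3) < 1 by decide)).not_levelLT (hc (show (1 : Fin 3) < 2 by decide))

variable {f g : α → ℕ}

theorem IsPacked.odd_iff_exists_levelLT (hf : IsPacked f) (x : α) :
    Odd (f x) ↔ ∃ y, LevelLT f y x := by
  refine ⟨fun hx => ?_, fun ⟨_, h⟩ => h.2.1⟩
  obtain ⟨y, hy⟩ := hf x 0 hx.pos
  exact ⟨y, by simp [LevelLT, hy, hx, hx.pos]⟩

theorem IsPacked.le_of_levelLT_eq (hf : IsPacked f) (hg : IsPacked g)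
    (h : LevelLT f = LevelLT g) {a b : α} (hab : f a ≤ f b) : g a ≤ g b := by
  have hodd : ∀ x, Odd (f x) ↔ Odd (g x) := fun x => by
    rw [hf.odd_iff_exists_levelLT, hg.odd_iff_exists_levelLT, h]
  have heven : ∀ x, Even (f x) ↔ Even (g x) := fun x => by
    simpa only [Nat.not_odd_iff_even] using (hodd x).not
  have e : ∀ u v, LevelLT f u v ↔ LevelLT g u v := fun u v => by rw [h]
  by_contra! hba
  obtain ⟨y, hy⟩ : ∃ y, g y = g b + 1 :=
    (Nat.succ_le_of_lt hba).lt_or_eq.elim (hg a _) fun e => ⟨a, e.symm⟩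
  rcases Nat.even_or_odd (g a) with ha | ha <;> rcases Nat.even_or_odd (g b) with hb | hb
  · -- `b < y` but not `a < y`, although `f a ≤ f b`
    have hby := (e b y).2 ⟨hb, hy ▸ hb.add_one, by omega⟩
    have hay := ((e a y).1 ⟨(heven a).2 ha, hby.2.1, hab.trans_lt hby.2.2⟩).2.2
    omega
  · have hab' : LevelLT f a b := ⟨(heven a).2 ha, (hodd b).2 hb,
      hab.lt_of_ne fun e => Nat.not_even_iff_odd.2 ((hodd b).2 hb) (e ▸ (heven a).2 ha)⟩
    have := ((e a b).1 hab').2.2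
    omega
  · have := ((e b a).2 ⟨hb, ha, hba⟩).2.2
    omega
  · -- `y < a` but not `y < b`, although `f a ≤ f b`
    have hya := (e y a).2 ⟨hy ▸ hb.add_one, ha, by rw [Nat.odd_iff] at ha hb; omega⟩
    have hyb := ((e y b).1 ⟨hya.1, (hodd b).2 hb, hya.2.2.trans_le hab⟩).2.2
    omega

theorem IsPacked.eq_of_levelOrder_eq (hf : IsPacked f) (hg : IsPacked g)
    (h : levelOrder f = levelOrder g) : f = g := by
  have hlt : LevelLT f = LevelLT g := congrArg (fun P : PartialOrder α => P.lt) h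
  exact hf.eq_of_le_iff hg fun a b =>
    ⟨hf.le_of_levelLT_eq hg hlt, hg.le_of_levelLT_eq hf hlt.symm⟩

end LevelOrder

section Chain

variable {β : Type*} [PartialOrder β] [DecidableLT β] {s : Finset β}

theorem card_filter_lt_lt_of_lt {x y : β} (hx : x ∈ s) (hxy : x < y) :
    #(s.filter (· < x)) < #(s.filter (· < y)) :=
  card_lt_card <| (ssubset_iff_of_subset fun z hz => by
    simp only [mem_filter] at hz ⊢; exact ⟨hz.1, hz.2.trans hxy⟩).2
    ⟨x, mem_filter.2 ⟨hx, hxy⟩, fun h => lt_irrefl x (mem_filter.1 h).2⟩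

theorem _root_.IsChain.exists_card_filter_lt_eq (hs : IsChain (· ≤ ·) (s : Set β)) {j : ℕ}
    (hj : j < #s) : ∃ x ∈ s, #(s.filter (· < x)) = j := by
  have hsurj := surjOn_of_injOn_of_card_le (s := s) (t := range #s)
    (fun x => #(s.filter (· < x)))
    (fun x hx => mem_range.2 <| card_lt_card <| filter_ssubset.2 ⟨x, hx, lt_irrefl x⟩)
    (fun x hx y hy hxy => by
      by_contra hne
      rcases hs.total hx hy with h | h
      · exact (card_filter_lt_lt_of_lt hx (h.lt_of_ne hne)).ne hxy
      · exact (card_filter_lt_lt_of_lt hy (h.lt_of_ne (Ne.symm hne))).ne hxy.symm)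
    (by simp)
  exact hsurj (mem_range.2 hj)

theorem _root_.IsChain.lt_of_mem_of_notMem {α : Type*} {S : Set (Finset α)}
    (hS : IsChain (· ≤ ·) S) {D E : Finset α} (hD : D ∈ S) (hE : E ∈ S) {y : α} (hyE : y ∈ E)
    (hyD : y ∉ D) : D < E := by
  rcases hS.total hD hE with h | h
  · exact h.lt_of_ne (by rintro rfl; exact hyD hyE)
  · exact absurd (h hyE) hyD

theorem _root_.IsChain.exists_mem_forall_notMem_of_lt {α : Type*} [DecidableEq α]
    {S : Finset (Finset α)} (hS : IsChain (· ≤ ·) (S : Set (Finset α))) {D : Finset α}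
    (hD : D.Nonempty) : ∃ y ∈ D, ∀ D' ∈ S, D' < D → y ∉ D' := by
  rcases (S.filter (· < D)).eq_empty_or_nonempty with h | h
  · obtain ⟨y, hy⟩ := hD
    exact ⟨y, hy, fun D' hD' hlt => absurd (mem_filter.2 ⟨hD', hlt⟩) (h ▸ notMem_empty _)⟩
  · obtain ⟨M, hM⟩ := exists_maximal h
    obtain ⟨hMS, hMD⟩ := mem_filter.1 hM.prop
    obtain ⟨y, hyD, hyM⟩ := exists_of_ssubset hMD
    refine ⟨y, hyD, fun D' hD' hlt hy => hyM ?_⟩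
    rcases hS.total hD' hMS with h' | h'
    · exact h' hy
    · exact hM.2 (mem_filter.2 ⟨hD', hlt⟩) h' hy

end Chain

section Levels

variable {α : Type*} [PartialOrder α] [Fintype α]

open Classical

noncomputable def below (x : α) : Finset α := univ.filter (· < x)

variable (α) in
noncomputable def belowSets : Finset (Finset α) :=
  (univ.filter fun x : α => (below x).Nonempty).image below

noncomputable def level (x : α) : ℕ :=
  if (below x).Nonempty then 2 * #((belowSets α).filter (· < below x)) + 1
  else 2 * #((belowSets α).filter (x ∉ ·))

theorem mem_below {x y : α} : y ∈ below x ↔ y < x := by simp [below]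

theorem mem_belowSets {D : Finset α} :
    D ∈ belowSets α ↔ ∃ x, (below x).Nonempty ∧ below x = D := by
  simp [belowSets]

theorem below_mem_belowSets {x : α} (hx : (below x).Nonempty) : below x ∈ belowSets α :=
  mem_belowSets.2 ⟨x, hx, rfl⟩

theorem odd_level_iff {x : α} : Odd (level x) ↔ (below x).Nonempty := by
  by_cases hx : (below x).Nonempty <;> simp [level, hx]

theorem level_le (x : α) : level x ≤ 2 * #(belowSets α) := by
  unfold level
  split_ifs with hx
  · have : #((belowSets α).filter (· < below x)) < #(belowSets α) :=
      card_lt_card (filter_ssubset.2 ⟨below x, below_mem_belowSets hx, lt_irrefl _⟩)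
    omega
  · have := card_filter_le (belowSets α) (x ∉ ·)
    omega

theorem isChain_belowSets (hP : IsSemiorder α) (hc : ∀ a b c : α, a < b → b < c → False) :
    IsChain (· ≤ ·) (belowSets α : Set (Finset α)) := by
  rintro _ hD _ hD' -
  obtain ⟨x, -, rfl⟩ := mem_belowSets.1 hD
  obtain ⟨y, -, rfl⟩ := mem_belowSets.1 hD'
  by_contra! h
  obtain ⟨a, hax, hay⟩ := not_subset.1 h.1
  obtain ⟨b, hby, hbx⟩ := not_subset.1 h.2
  rw [mem_below] at hax hay hby hbx
  -- `a < x` and `b < y` form a `2+2`: any further comparability would give a `3`-chain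
  refine hP.1 ⟨x, a, y, b, hax, hby, ?_, ?_, ?_, ?_⟩ <;>
    simp only [Incomp, le_iff_lt_or_eq, not_or] <;> grind

theorem lt_iff_levelLT (hc : ∀ a b c : α, a < b → b < c → False)
    (hS : IsChain (· ≤ ·) (belowSets α : Set (Finset α))) {a b : α} :
    a < b ↔ LevelLT level a b := by
  constructor
  · intro hab
    have hb : (below b).Nonempty := ⟨a, mem_below.2 hab⟩
    have ha : ¬ (below a).Nonempty := fun ⟨z, hz⟩ => hc z a b (mem_below.1 hz) hab
    have hsub : (belowSets α).filter (a ∉ ·) ⊆ (belowSets α).filter (· < below b) :=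
      fun D hD => mem_filter.2 ⟨(mem_filter.1 hD).1, hS.lt_of_mem_of_notMem (mem_filter.1 hD).1
        (below_mem_belowSets hb) (mem_below.2 hab) (mem_filter.1 hD).2⟩
    have := card_le_card hsub
    simp only [LevelLT, level, if_pos hb, if_neg ha]
    exact ⟨even_two_mul _, odd_two_mul_add_one _, by omega⟩
  · rintro ⟨ha, hb, hab⟩
    rw [← Nat.not_odd_iff_even, odd_level_iff] at ha
    rw [odd_level_iff] at hb
    by_contra hnot
    have hsub : insert (below b) ((belowSets α).filter (· < below b)) ⊆
        (belowSets α).filter (a ∉ ·) := by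
      intro D hD
      rcases mem_insert.1 hD with rfl | hD
      · exact mem_filter.2 ⟨below_mem_belowSets hb, fun h => hnot (mem_below.1 h)⟩
      · obtain ⟨hDS, hDb⟩ := mem_filter.1 hD
        exact mem_filter.2 ⟨hDS, fun h => hnot (mem_below.1 (hDb.le h))⟩
    have := card_le_card hsub
    rw [card_insert_of_notMem (by simp)] at this
    simp only [level, if_pos hb, if_neg ha] at hab
    omega

theorem isPacked_level (hc : ∀ a b c : α, a < b → b < c → False)
    (hS : IsChain (· ≤ ·) (belowSets α : Set (Finset α))) : IsPacked (level (α := α)) := by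
  intro x i hi
  obtain ⟨D, hDS, hD⟩ := hS.exists_card_filter_lt_eq (j := i / 2) (by have := level_le x; omega)
  obtain ⟨z, hz, rfl⟩ := mem_belowSets.1 hDS
  rcases Nat.mod_two_eq_zero_or_one i with hi2 | hi2
  · -- a minimal element that `below z` is the first set of the chain to contain
    obtain ⟨y, hyz, hy⟩ := hS.exists_mem_forall_notMem_of_lt hz
    have hmin : ¬ (below y).Nonempty :=
      fun ⟨w, hw⟩ => hc w y z (mem_below.1 hw) (mem_below.1 hyz)
    have hfilter : (belowSets α).filter (y ∉ ·) = (belowSets α).filter (· < below z) := by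
      ext D'
      simp only [mem_filter, and_congr_right_iff]
      exact fun hD' => ⟨hS.lt_of_mem_of_notMem hD' hDS hyz, hy D' hD'⟩
    exact ⟨y, by rw [level, if_neg hmin, hfilter, hD]; omega⟩
  · exact ⟨z, by rw [level, if_pos hz, hD]; omega⟩

end Levels

theorem hasChain_three_of_lt_of_lt {α : Type*} [Preorder α] {a b c : α} (hab : a < b)
    (hbc : b < c) : HasChain α 3 := by
  refine ⟨![a, b, c], Fin.strictMono_iff_lt_succ.2 fun i => ?_⟩
  fin_cases i <;> simpa

theorem exists_isPacked_levelOrder_eq {α : Type*} [Fintype α] (P : PartialOrder α)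
    (hP : @IsSemiorder α P) (h3 : ¬ @HasChain α P.toPreorder 3) :
    ∃ f : α → ℕ, IsPacked f ∧ levelOrder f = P := by
  let := P
  have hc : ∀ a b c : α, a < b → b < c → False :=
    fun a b c hab hbc => h3 (hasChain_three_of_lt_of_lt hab hbc)
  have hS := isChain_belowSets hP hc
  refine ⟨level, isPacked_level hc hS, PartialOrder.ext fun a b => ?_⟩
  change a = b ∨ LevelLT level a b ↔ a ≤ b
  rw [← lt_iff_levelLT hc hS, le_iff_eq_or_lt]

theorem statement18 (n : ℕ) :
    Nat.card {P : PartialOrder (Fin n) // SemiLenLe n 1 P}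
      = Nat.card {L : List (Finset (Fin n)) //
          (∀ s ∈ L, s.Nonempty) ∧ L.Pairwise (fun s t => Disjoint s t) ∧
          L.foldr (· ∪ ·) ∅ = Finset.univ} := by
  refine Eq.trans ?_ card_isOrderedPartition_eq_card_isPacked.symm
  refine (Nat.card_eq_of_bijective (fun f : {f : Fin n → ℕ // IsPacked f} =>
    (⟨levelOrder f.1, isSemiorder_levelOrder f.1, not_hasChain_three_levelOrder f.1⟩ :
      {P // SemiLenLe n 1 P})) ⟨?_, ?_⟩).symm
  · exact fun f g h => Subtype.ext (f.2.eq_of_levelOrder_eq g.2 (congrArg Subtype.val h))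
  · rintro ⟨P, hP, h3⟩
    obtain ⟨f, hf, rfl⟩ := exists_isPacked_levelOrder_eq P hP h3
    exact ⟨⟨f, hf⟩, rfl⟩

end Paper
end
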